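/- arXiv:2009.06125 — 4 statements merged into one kernel-verified Lean document; each statement's English description precedes it below -/
import Mathlib

section
/- Let f : ℝ^d → ℝ be differentiable with ∇f bounded by M and L-Lipschitz. Fix α ∈ (0,1), ε > 0, x₀ ∈ ℝ^d and v₀ ∈ ℝ^d with v₀ ≥ 0 componentwise. For each learning rate η > 0 let (x_k^η) be the RMSprop iterates started from (x₀, v₀), and let X^η : [0,∞) → ℝ^d be the piecewise-constant interpolation X^η(t) = x_k^η for t ∈ [kη, (k+1)η). Let x : [0,∞) → ℝ^d be a solution of the ODE ẋ = −∇f(x)/(|∇f(x)| + ε) (componentwise) with x(0) = x₀. Then for every T > 0, lim_{η→0} sup_{t∈[0,T]} ‖X^η(t) − x(t)‖ = 0; equivalently, for every T > 0 and τ > 0 there exists η₀ > 0 such that for all 0 < η < η₀, sup_{t∈[0,T]} ‖X^η(t) − x(t)‖ < τ. -/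
open Real Finset

lemma comp_le_norm {d : ℕ} (z : EuclideanSpace ℝ (Fin d)) (i : Fin d) : |z i| ≤ ‖z‖ := by
  rw [EuclideanSpace.norm_eq]
  simp only [Real.norm_eq_abs, sq_abs]
  rw [show |z i| = Real.sqrt ((z i)^2) by rw [Real.sqrt_sq_eq_abs]]
  apply Real.sqrt_le_sqrt
  exact Finset.single_le_sum (f := fun j => (z j)^2) (fun j _ => by positivity) (Finset.mem_univ i)

lemma norm_le_sqrtd {d : ℕ} (z : EuclideanSpace ℝ (Fin d)) {c : ℝ} (hc : 0 ≤ c)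
    (h : ∀ i, |z i| ≤ c) : ‖z‖ ≤ Real.sqrt d * c := by
  rw [EuclideanSpace.norm_eq]
  simp only [Real.norm_eq_abs, sq_abs]
  have hs : ∑ i, (z i) ^ 2 ≤ (d : ℝ) * c ^ 2 := by
    calc ∑ i, (z i) ^ 2 ≤ ∑ _i : Fin d, c ^ 2 := by
          apply Finset.sum_le_sum
          intro i _
          have := h i
          nlinarith [abs_nonneg (z i), sq_abs (z i)]
      _ = (d : ℝ) * c ^ 2 := by simp [mul_comm]
  calc Real.sqrt (∑ i, (z i) ^ 2) ≤ Real.sqrt ((d:ℝ) * c^2) := Real.sqrt_le_sqrt hs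
    _ = Real.sqrt d * c := by rw [Real.sqrt_mul (by positivity), Real.sqrt_sq hc]

lemma key2 (a b : ℝ) : abs (a * |b| - b * |a|) ≤ |a - b| * (|a| + |b|) := by
  rcases abs_cases a with ⟨e1, s1⟩ | ⟨e1, s1⟩ <;> rcases abs_cases b with ⟨e2, s2⟩ | ⟨e2, s2⟩ <;>
    rw [e1, e2]
  · rw [show a * b - b * a = 0 by ring, abs_zero]; positivity
  · rw [show a * -b - b * a = -2 * (a * b) by ring, abs_mul, abs_of_nonpos (by nlinarith : a * b ≤ 0)]
    have he4 : |a - b| = a - b := abs_of_nonneg (by linarith)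
    rw [he4]; norm_num; nlinarith [sq_nonneg (a + b)]
  · rw [show a * b - b * -a = 2 * (a * b) by ring, abs_mul, abs_of_nonpos (by nlinarith : a * b ≤ 0)]
    have he4 : |a - b| = -(a - b) := abs_of_nonpos (by linarith)
    rw [he4]; norm_num; nlinarith [sq_nonneg (a + b)]
  · rw [show a * -b - b * -a = 0 by ring, abs_zero]
    nlinarith [abs_nonneg (a - b)]

lemma phi_lip {ε : ℝ} (hε : 0 < ε) (a b : ℝ) :
    |a / (|a| + ε) - b / (|b| + ε)| ≤ |a - b| / ε := by
  have ha : 0 < |a| + ε := by positivity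
  have hb : 0 < |b| + ε := by positivity
  rw [div_sub_div _ _ (ne_of_gt ha) (ne_of_gt hb), abs_div, abs_of_pos (mul_pos ha hb),
    div_le_div_iff₀ (mul_pos ha hb) hε]
  have hnum : |a * (|b| + ε) - (|a| + ε) * b| ≤ |a - b| * (ε + |a| + |b|) := by
    calc |a * (|b| + ε) - (|a| + ε) * b|
        = |ε * (a - b) + (a * |b| - b * |a|)| := by ring_nf
      _ ≤ |ε * (a - b)| + abs (a * |b| - b * |a|) := abs_add_le _ _
      _ ≤ ε * |a - b| + |a - b| * (|a| + |b|) := by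
          rw [abs_mul, abs_of_pos hε]; exact add_le_add le_rfl (key2 a b)
      _ = |a - b| * (ε + |a| + |b|) := by ring
  nlinarith [abs_nonneg (a - b), abs_nonneg a, abs_nonneg b,
    mul_nonneg (abs_nonneg (a-b)) (mul_nonneg (abs_nonneg a) (abs_nonneg b)),
    mul_le_mul_of_nonneg_right hnum (le_of_lt hε)]

lemma sqrt_sub_sqrt_le {a b : ℝ} (ha : 0 ≤ a) (hb : 0 ≤ b) :
    |Real.sqrt a - Real.sqrt b| ≤ Real.sqrt |a - b| := by
  wlog h : b ≤ a generalizing a b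
  · rw [abs_sub_comm, abs_sub_comm a b]; exact this hb ha (le_of_not_ge h)
  rw [abs_of_nonneg (by linarith : (0:ℝ) ≤ a - b),
    abs_of_nonneg (sub_nonneg.mpr (Real.sqrt_le_sqrt h))]
  have h2 : a ≤ (Real.sqrt b + Real.sqrt (a - b)) ^ 2 := by
    have e1 := Real.sq_sqrt hb
    have e2 := Real.sq_sqrt (by linarith : (0:ℝ) ≤ a - b)
    nlinarith [Real.sqrt_nonneg b, Real.sqrt_nonneg (a - b)]
  have h3 : Real.sqrt a ≤ Real.sqrt b + Real.sqrt (a - b) := by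
    calc Real.sqrt a ≤ Real.sqrt ((Real.sqrt b + Real.sqrt (a - b)) ^ 2) := Real.sqrt_le_sqrt h2
      _ = Real.sqrt b + Real.sqrt (a - b) := Real.sqrt_sq (by positivity)
  linarith

lemma sqrt_add_le' {a b : ℝ} (ha : 0 ≤ a) (hb : 0 ≤ b) :
    Real.sqrt (a + b) ≤ Real.sqrt a + Real.sqrt b := by
  have h2 : a + b ≤ (Real.sqrt a + Real.sqrt b) ^ 2 := by
    have e1 := Real.sq_sqrt ha
    have e2 := Real.sq_sqrt hb
    nlinarith [Real.sqrt_nonneg a, Real.sqrt_nonneg b]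
  calc Real.sqrt (a + b) ≤ Real.sqrt ((Real.sqrt a + Real.sqrt b) ^ 2) := Real.sqrt_le_sqrt h2
    _ = Real.sqrt a + Real.sqrt b := Real.sqrt_sq (by positivity)

lemma denom_swap {ε M : ℝ} (hε : 0 < ε) {a s : ℝ} (hs : 0 ≤ s) (haM : |a| ≤ M) :
    |a / (s + ε) - a / (|a| + ε)| ≤ M * abs (s - |a|) / ε ^ 2 := by
  have h1 : 0 < s + ε := by linarith
  have h2 : 0 < |a| + ε := by positivity
  rw [div_sub_div _ _ (ne_of_gt h1) (ne_of_gt h2), abs_div, abs_of_pos (mul_pos h1 h2)]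
  have hnum : |a * (|a| + ε) - (s + ε) * a| = |a| * abs (s - |a|) := by
    rw [show a * (|a| + ε) - (s + ε) * a = a * (|a| - s) by ring, abs_mul, abs_sub_comm]
  rw [hnum]
  have hM0 : 0 ≤ M := le_trans (abs_nonneg a) haM
  apply div_le_div₀ (mul_nonneg hM0 (abs_nonneg _))
    (mul_le_mul_of_nonneg_right haM (abs_nonneg _)) (by positivity)
  nlinarith [abs_nonneg a]


set_option maxHeartbeats 1600000 in
/-- Proposition 1 (RMSprop case): with fixed momentum factor `α ∈ (0,1)` and stabilizer
`ε > 0`, as the learning rate `η → 0` the piecewise-constant interpolation of the RMSprop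
iterates converges uniformly on `[0, T]` to the solution of the ODE
`ẋ = −∇f(x)/(|∇f(x)| + ε)` (componentwise). -/
theorem rmsprop_converges_to_signGD_ode
    (d : ℕ) (f : EuclideanSpace ℝ (Fin d) → ℝ)
    (hf : Differentiable ℝ f)
    (M L : ℝ)
    (hM : ∀ z, ‖gradient f z‖ ≤ M)
    (hL : ∀ z w, ‖gradient f z - gradient f w‖ ≤ L * ‖z - w‖)
    (α ε : ℝ) (hα : α ∈ Set.Ioo (0 : ℝ) 1) (hε : 0 < ε)
    (x₀ v₀ : EuclideanSpace ℝ (Fin d)) (hv₀ : ∀ i, 0 ≤ v₀ i)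
    -- the RMSprop iterates `x η k`, `v η k` for each learning rate `η > 0`
    (x v : ℝ → ℕ → EuclideanSpace ℝ (Fin d))
    (hx0 : ∀ η, 0 < η → x η 0 = x₀)
    (hv0 : ∀ η, 0 < η → v η 0 = v₀)
    (hv : ∀ η, 0 < η → ∀ k i,
      v η (k + 1) i = α * v η k i + (1 - α) * (gradient f (x η k) i) ^ 2)
    (hx : ∀ η, 0 < η → ∀ k i,
      x η (k + 1) i = x η k i - η * gradient f (x η k) i / (Real.sqrt (v η (k + 1) i) + ε))
    -- the piecewise-constant interpolation `X η`
    (X : ℝ → ℝ → EuclideanSpace ℝ (Fin d))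
    (hX : ∀ η, 0 < η → ∀ t : ℝ, 0 ≤ t → ∀ k : ℕ,
      t ∈ Set.Ico ((k : ℝ) * η) (((k : ℝ) + 1) * η) → X η t = x η k)
    -- the solution `y` of the limiting ODE
    (y : ℝ → EuclideanSpace ℝ (Fin d))
    (hy0 : y 0 = x₀)
    (hy : ∀ t : ℝ, 0 ≤ t → ∀ i,
      HasDerivAt (fun s => y s i)
        (-(gradient f (y t) i / (|gradient f (y t) i| + ε))) t) :
    ∀ T > (0 : ℝ), ∀ τ > (0 : ℝ), ∃ η₀ > (0 : ℝ), ∀ η, 0 < η → η < η₀ →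
      ∀ t ∈ Set.Icc (0 : ℝ) T, ‖X η t - y t‖ < τ := by
  intro T hT τ hτ
  obtain ⟨hα0, hα1⟩ := hα
  have hM0 : 0 ≤ M := le_trans (norm_nonneg _) (hM x₀)
  -- constants
  set L' : ℝ := max L 0 with hL'def
  have hL'0 : 0 ≤ L' := le_max_right _ _
  have hL' : ∀ z w, ‖gradient f z - gradient f w‖ ≤ L' * ‖z - w‖ := fun z w =>
    (hL z w).trans (mul_le_mul_of_nonneg_right (le_max_left _ _) (norm_nonneg _))
  have hsd0 : (0:ℝ) ≤ Real.sqrt d := Real.sqrt_nonneg _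
  set sd : ℝ := Real.sqrt d with hsddef
  set β : ℝ := Real.sqrt α with hβdef
  have hβ0 : 0 ≤ β := Real.sqrt_nonneg _
  have hβsq : β ^ 2 = α := Real.sq_sqrt hα0.le
  have hβ1 : β < 1 := by
    rw [hβdef, show (1:ℝ) = Real.sqrt 1 by rw [Real.sqrt_one]]
    exact Real.sqrt_lt_sqrt hα0.le hα1
  have hsqrtpow : ∀ k : ℕ, Real.sqrt (α ^ k) = β ^ k := by
    intro k
    rw [← hβsq, ← pow_mul, mul_comm, pow_mul]
    exact Real.sqrt_sq (pow_nonneg hβ0 k)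
  set V : ℝ := ‖v₀‖ + M ^ 2 with hVdef
  have hV0 : 0 ≤ V := by positivity
  set C : ℝ := 2 * M ^ 2 * L' * sd / ε with hCdef
  have hC0 : 0 ≤ C :=
    div_nonneg (mul_nonneg (mul_nonneg (by positivity) hL'0) hsd0) hε.le
  set B : ℝ := C / (1 - α) with hBdef
  have hB0 : 0 ≤ B := div_nonneg hC0 (by linarith)
  have hBC : (1 - α) * B = C := by
    rw [hBdef, mul_comm, div_mul_cancel₀ _ (by linarith : (1:ℝ) - α ≠ 0)]
  set Λ : ℝ := sd * (L' / ε) with hΛdef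
  have hΛ0 : 0 ≤ Λ := mul_nonneg hsd0 (div_nonneg hL'0 hε.le)
  set P : ℝ := sd * (M / ε ^ 2) * Real.sqrt V with hPdef
  have hP0 : 0 ≤ P := mul_nonneg (mul_nonneg hsd0 (by positivity)) (Real.sqrt_nonneg _)
  -- componentwise gradient facts
  have hsub : ∀ (z w : EuclideanSpace ℝ (Fin d)) (i : Fin d), (z - w) i = z i - w i :=
    fun z w i => rfl
  have hGM : ∀ z i, |gradient f z i| ≤ M := fun z i => (comp_le_norm _ i).trans (hM z)
  have hGL : ∀ z w (i : Fin d), |gradient f z i - gradient f w i| ≤ L' * ‖z - w‖ := by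
    intro z w i
    have h1 := comp_le_norm (gradient f z - gradient f w) i
    rw [hsub] at h1
    exact h1.trans (hL' z w)
  -- the ODE vector field, componentwise
  set gc : EuclideanSpace ℝ (Fin d) → Fin d → ℝ :=
    fun z i => -(gradient f z i / (|gradient f z i| + ε)) with hgcdef
  have hgc1 : ∀ z i, |gc z i| ≤ 1 := by
    intro z i
    rw [hgcdef]
    simp only [abs_neg, abs_div, abs_abs]
    rw [abs_of_pos (by positivity : (0:ℝ) < |gradient f z i| + ε)]
    rw [div_le_one (by positivity)]
    linarith [abs_nonneg (gradient f z i)]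
  have hgclip : ∀ z w i, |gc z i - gc w i| ≤ L' / ε * ‖z - w‖ := by
    intro z w i
    rw [hgcdef]
    have h0 : |-(gradient f z i / (|gradient f z i| + ε)) -
        -(gradient f w i / (|gradient f w i| + ε))|
        = |gradient f z i / (|gradient f z i| + ε) - gradient f w i / (|gradient f w i| + ε)| := by
      rw [← abs_neg]; ring_nf
    rw [h0]
    calc |gradient f z i / (|gradient f z i| + ε) - gradient f w i / (|gradient f w i| + ε)|
        ≤ |gradient f z i - gradient f w i| / ε := phi_lip hε _ _
      _ ≤ L' * ‖z - w‖ / ε := by gcongr; exact hGL z w i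
      _ = L' / ε * ‖z - w‖ := by ring
  -- facts about the ODE solution y
  have hyd : ∀ t : ℝ, 0 ≤ t → ∀ i, HasDerivAt (fun s => y s i) (gc (y t) i) t := by
    intro t ht i
    simp only [hgcdef]
    exact hy t ht i
  have hyinc : ∀ a b : ℝ, 0 ≤ a → a ≤ b → ∀ i, |y b i - y a i| ≤ b - a := by
    intro a b ha hab i
    have key := Convex.norm_image_sub_le_of_norm_hasDerivWithin_le
      (f := fun s => y s i) (f' := fun s => gc (y s) i) (s := Set.Icc a b) (C := 1)
      (fun s hs => (hyd s (le_trans ha hs.1) i).hasDerivWithinAt)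
      (fun s _ => by rw [Real.norm_eq_abs]; exact hgc1 (y s) i)
      (convex_Icc a b) (Set.left_mem_Icc.mpr hab) (Set.right_mem_Icc.mpr hab)
    rw [Real.norm_eq_abs, Real.norm_eq_abs] at key
    calc |y b i - y a i| ≤ 1 * |b - a| := key
      _ = b - a := by rw [one_mul, abs_of_nonneg (by linarith)]
  have hynorm : ∀ a b : ℝ, 0 ≤ a → a ≤ b → ‖y b - y a‖ ≤ sd * (b - a) := by
    intro a b ha hab
    rw [hsddef]
    apply norm_le_sqrtd _ (by linarith)
    intro i; rw [hsub]; exact hyinc a b ha hab i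
  have hykey : ∀ a b : ℝ, 0 ≤ a → a ≤ b → ∀ i,
      |y b i - y a i - (b - a) * gc (y a) i| ≤ L' / ε * sd * (b - a) ^ 2 := by
    intro a b ha hab i
    have hLε0 : (0:ℝ) ≤ L' / ε := div_nonneg hL'0 hε.le
    have hd : ∀ s ∈ Set.Icc a b, HasDerivWithinAt
        (fun u => y u i - (u - a) * gc (y a) i)
        (gc (y s) i - gc (y a) i) (Set.Icc a b) s := by
      intro s hs
      have h1 := hyd s (le_trans ha hs.1) i
      have h2 : HasDerivAt (fun u : ℝ => (u - a) * gc (y a) i) (gc (y a) i) s := by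
        simpa using ((hasDerivAt_id s).sub_const a).mul_const (gc (y a) i)
      exact (h1.sub h2).hasDerivWithinAt
    have hbnd : ∀ s ∈ Set.Icc a b, ‖gc (y s) i - gc (y a) i‖ ≤ L' / ε * sd * (b - a) := by
      intro s hs
      rw [Real.norm_eq_abs]
      calc |gc (y s) i - gc (y a) i| ≤ L' / ε * ‖y s - y a‖ := hgclip _ _ i
        _ ≤ L' / ε * (sd * (s - a)) :=
            mul_le_mul_of_nonneg_left (hynorm a s ha hs.1) hLε0
        _ ≤ L' / ε * (sd * (b - a)) := by
            apply mul_le_mul_of_nonneg_left _ hLε0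
            exact mul_le_mul_of_nonneg_left (by linarith [hs.2]) hsd0
        _ = L' / ε * sd * (b - a) := by ring
    have key := Convex.norm_image_sub_le_of_norm_hasDerivWithin_le hd hbnd
      (convex_Icc a b) (Set.left_mem_Icc.mpr hab) (Set.right_mem_Icc.mpr hab)
    rw [Real.norm_eq_abs, Real.norm_eq_abs] at key
    calc |y b i - y a i - (b - a) * gc (y a) i|
        = |(y b i - (b - a) * gc (y a) i) - (y a i - (a - a) * gc (y a) i)| := by ring_nf
      _ ≤ L' / ε * sd * (b - a) * |b - a| := key
      _ = L' / ε * sd * (b - a) ^ 2 := by rw [abs_of_nonneg (by linarith : (0:ℝ) ≤ b - a)]; ring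
  -- the global error bound function
  set Q : ℝ → ℝ := fun η => sd * (M / ε ^ 2) * Real.sqrt (B * η) + sd * Λ * η with hQdef
  have hQ0 : ∀ η : ℝ, 0 ≤ η → 0 ≤ Q η := by
    intro η hη
    apply add_nonneg
    · exact mul_nonneg (mul_nonneg hsd0 (by positivity)) (Real.sqrt_nonneg _)
    · exact mul_nonneg (mul_nonneg hsd0 hΛ0) hη
  set Φ : ℝ → ℝ := fun η =>
    Real.exp (Λ * T) * (η * P / (1 - β) + T * Q η) + sd * η with hΦdef
  have hΦcont : Continuous Φ := by
    rw [hΦdef, hQdef]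
    fun_prop
  have hΦ0 : Φ 0 = 0 := by
    rw [hΦdef, hQdef]
    simp
  obtain ⟨δ, hδ0, hδ⟩ := Metric.tendsto_nhds_nhds.mp (hΦcont.tendsto 0) τ hτ
  refine ⟨δ, hδ0, ?_⟩
  intro η hη hηδ t ht
  have hΦη : Φ η < τ := by
    have h1 := hδ (show dist η 0 < δ by rw [Real.dist_eq, sub_zero, abs_of_pos hη]; exact hηδ)
    rw [hΦ0, Real.dist_eq, sub_zero] at h1
    exact lt_of_le_of_lt (le_abs_self _) h1
  refine lt_of_le_of_lt ?_ hΦη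
  -- discrete iterate facts for this fixed η
  have hvpos : ∀ k i, 0 ≤ v η k i := by
    intro k
    induction k with
    | zero => intro i; rw [hv0 η hη]; exact hv₀ i
    | succ k ih =>
      intro i
      rw [hv η hη k i]
      have := ih i
      nlinarith [sq_nonneg (gradient f (x η k) i)]
  have hstep : ∀ k, ‖x η (k+1) - x η k‖ ≤ sd * (η * M / ε) := by
    intro k
    rw [hsddef]
    apply norm_le_sqrtd _ (div_nonneg (mul_nonneg hη.le hM0) hε.le)
    intro i
    rw [hsub, hx η hη k i]
    rw [show x η k i - η * gradient f (x η k) i / (Real.sqrt (v η (k+1) i) + ε) - x η k i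
        = -(η * gradient f (x η k) i / (Real.sqrt (v η (k+1) i) + ε)) by ring]
    rw [abs_neg, abs_div, abs_of_pos (by positivity : (0:ℝ) < Real.sqrt (v η (k+1) i) + ε),
      abs_mul, abs_of_pos hη]
    apply div_le_div₀ (mul_nonneg hη.le hM0)
      (mul_le_mul_of_nonneg_left (hGM _ i) hη.le) hε
      (by linarith [Real.sqrt_nonneg (v η (k+1) i)])
  have hverr : ∀ k i, |v η (k+1) i - (gradient f (x η k) i) ^ 2| ≤ α ^ k * V + B * η := by
    intro k
    induction k with
    | zero =>
      intro i
      rw [hv η hη 0 i, hx0 η hη, hv0 η hη]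
      rw [show α * v₀ i + (1 - α) * (gradient f x₀ i) ^ 2 - (gradient f x₀ i) ^ 2
          = α * (v₀ i - (gradient f x₀ i) ^ 2) by ring]
      rw [abs_mul, abs_of_pos hα0]
      have h2 : (gradient f x₀ i) ^ 2 ≤ M ^ 2 := by
        nlinarith [hGM x₀ i, abs_nonneg (gradient f x₀ i), sq_abs (gradient f x₀ i)]
      have h1 : |v₀ i - (gradient f x₀ i) ^ 2| ≤ V := by
        calc |v₀ i - (gradient f x₀ i) ^ 2| ≤ |v₀ i| + |(gradient f x₀ i) ^ 2| := abs_sub _ _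
          _ ≤ ‖v₀‖ + M ^ 2 := by
              apply add_le_add (comp_le_norm v₀ i)
              rw [abs_of_nonneg (sq_nonneg _)]; exact h2
          _ = V := by rw [hVdef]
      have hBη : 0 ≤ B * η := mul_nonneg hB0 hη.le
      calc α * |v₀ i - (gradient f x₀ i) ^ 2| ≤ 1 * V :=
            mul_le_mul hα1.le h1 (abs_nonneg _) zero_le_one
        _ = α ^ 0 * V := by norm_num
        _ ≤ α ^ 0 * V + B * η := by linarith
    | succ k ih =>
      intro i
      rw [hv η hη (k+1) i]
      rw [show α * v η (k+1) i + (1 - α) * (gradient f (x η (k+1)) i) ^ 2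
            - (gradient f (x η (k+1)) i) ^ 2
          = α * (v η (k+1) i - (gradient f (x η (k+1)) i) ^ 2) by ring]
      rw [abs_mul, abs_of_pos hα0]
      have tri : |v η (k+1) i - (gradient f (x η (k+1)) i) ^ 2|
          ≤ |v η (k+1) i - (gradient f (x η k) i) ^ 2|
            + |(gradient f (x η k) i) ^ 2 - (gradient f (x η (k+1)) i) ^ 2| :=
        abs_sub_le _ _ _
      have hg2 : |(gradient f (x η k) i) ^ 2 - (gradient f (x η (k+1)) i) ^ 2| ≤ C * η := by
        have h1 : |gradient f (x η k) i - gradient f (x η (k+1)) i|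
            ≤ L' * (sd * (η * M / ε)) := by
          refine (hGL _ _ i).trans ?_
          apply mul_le_mul_of_nonneg_left _ hL'0
          rw [norm_sub_rev]
          exact hstep k
        have h2 : |gradient f (x η k) i + gradient f (x η (k+1)) i| ≤ 2 * M := by
          calc |gradient f (x η k) i + gradient f (x η (k+1)) i|
              ≤ |gradient f (x η k) i| + |gradient f (x η (k+1)) i| := abs_add_le _ _
            _ ≤ 2 * M := by linarith [hGM (x η k) i, hGM (x η (k+1)) i]
        calc |(gradient f (x η k) i) ^ 2 - (gradient f (x η (k+1)) i) ^ 2|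
            = |gradient f (x η k) i - gradient f (x η (k+1)) i|
              * |gradient f (x η k) i + gradient f (x η (k+1)) i| := by
              rw [← abs_mul]; ring_nf
          _ ≤ L' * (sd * (η * M / ε)) * (2 * M) := by
              apply mul_le_mul h1 h2 (abs_nonneg _)
              exact mul_nonneg hL'0 (mul_nonneg hsd0 (div_nonneg (mul_nonneg hη.le hM0) hε.le))
          _ = C * η := by rw [hCdef]; field_simp
      calc α * |v η (k+1) i - (gradient f (x η (k+1)) i) ^ 2|
          ≤ α * ((α ^ k * V + B * η) + C * η) :=
            mul_le_mul_of_nonneg_left (tri.trans (add_le_add (ih i) hg2)) hα0.le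
        _ ≤ α ^ (k+1) * V + B * η := by
            rw [pow_succ]
            nlinarith [mul_nonneg (mul_nonneg hB0 hη.le) (sq_nonneg (1 - α)),
              mul_nonneg hC0 hη.le, mul_nonneg (pow_nonneg hα0.le k) hV0, hBC]
  -- one-step update error
  have hxu : ∀ k i, |x η (k+1) i - x η k i - η * gc (x η k) i|
      ≤ η * (M / ε ^ 2 * (β ^ k * Real.sqrt V + Real.sqrt (B * η))) := by
    intro k i
    rw [hx η hη k i, hgcdef]
    rw [show x η k i - η * gradient f (x η k) i / (Real.sqrt (v η (k+1) i) + ε) - x η k i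
        - η * (-(gradient f (x η k) i / (|gradient f (x η k) i| + ε)))
        = -(η * (gradient f (x η k) i / (Real.sqrt (v η (k+1) i) + ε)
            - gradient f (x η k) i / (|gradient f (x η k) i| + ε))) by ring]
    rw [abs_neg, abs_mul, abs_of_pos hη]
    apply mul_le_mul_of_nonneg_left _ hη.le
    calc |gradient f (x η k) i / (Real.sqrt (v η (k+1) i) + ε)
          - gradient f (x η k) i / (|gradient f (x η k) i| + ε)|
        ≤ M * abs (Real.sqrt (v η (k+1) i) - |gradient f (x η k) i|) / ε ^ 2 :=
          denom_swap hε (Real.sqrt_nonneg _) (hGM _ i)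
      _ ≤ M / ε ^ 2 * (β ^ k * Real.sqrt V + Real.sqrt (B * η)) := by
          have h1 : abs (Real.sqrt (v η (k+1) i) - |gradient f (x η k) i|)
              ≤ Real.sqrt (abs (v η (k+1) i - (gradient f (x η k) i) ^ 2)) := by
            have hh := sqrt_sub_sqrt_le (hvpos (k+1) i) (sq_nonneg (gradient f (x η k) i))
            rwa [Real.sqrt_sq_eq_abs] at hh
          have h2 : Real.sqrt (abs (v η (k+1) i - (gradient f (x η k) i) ^ 2))
              ≤ β ^ k * Real.sqrt V + Real.sqrt (B * η) := by
            calc Real.sqrt (abs (v η (k+1) i - (gradient f (x η k) i) ^ 2))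
                ≤ Real.sqrt (α ^ k * V + B * η) := Real.sqrt_le_sqrt (hverr k i)
              _ ≤ Real.sqrt (α ^ k * V) + Real.sqrt (B * η) :=
                  sqrt_add_le' (mul_nonneg (pow_nonneg hα0.le k) hV0) (mul_nonneg hB0 hη.le)
              _ = β ^ k * Real.sqrt V + Real.sqrt (B * η) := by
                  rw [Real.sqrt_mul (pow_nonneg hα0.le k), hsqrtpow k]
          calc M * abs (Real.sqrt (v η (k+1) i) - |gradient f (x η k) i|) / ε ^ 2
              ≤ M * (β ^ k * Real.sqrt V + Real.sqrt (B * η)) / ε ^ 2 := by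
                gcongr
                exact h1.trans h2
            _ = M / ε ^ 2 * (β ^ k * Real.sqrt V + Real.sqrt (B * η)) := by ring
  -- grid-point error
  set D : ℕ → ℝ := fun k => ‖x η k - y ((k:ℝ) * η)‖ with hDdef
  have tri3 : ∀ p q r : ℝ, |p + q - r| ≤ |p| + |q| + |r| := by
    intro p q r
    calc |p + q - r| ≤ |p + q| + |r| := abs_sub _ _
      _ ≤ |p| + |q| + |r| := by linarith [abs_add_le p q]
  have hLε0 : (0:ℝ) ≤ L' / ε := div_nonneg hL'0 hε.le
  have hrec : ∀ k, D (k+1) ≤ (1 + η * Λ) * D k + η * (P * β ^ k + Q η) := by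
    intro k
    have ha0 : (0:ℝ) ≤ (k:ℝ) * η := by positivity
    have hDk0 : 0 ≤ D k := norm_nonneg _
    have hcb0 : 0 ≤ η * (M / ε ^ 2 * (β ^ k * Real.sqrt V + Real.sqrt (B * η)))
        + η * (L' / ε) * D k + L' / ε * sd * η ^ 2 := by
      have c1 : 0 ≤ η * (M / ε ^ 2 * (β ^ k * Real.sqrt V + Real.sqrt (B * η))) :=
        mul_nonneg hη.le (mul_nonneg (by positivity)
          (add_nonneg (mul_nonneg (pow_nonneg hβ0 k) (Real.sqrt_nonneg _)) (Real.sqrt_nonneg _)))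
      have c2 : 0 ≤ η * (L' / ε) * D k := mul_nonneg (mul_nonneg hη.le hLε0) hDk0
      have c3 : 0 ≤ L' / ε * sd * η ^ 2 := mul_nonneg (mul_nonneg hLε0 hsd0) (sq_nonneg η)
      linarith
    have hresti : ∀ i, |((x η (k+1) - y ((k:ℝ) * η + η)) - (x η k - y ((k:ℝ) * η))) i|
        ≤ η * (M / ε ^ 2 * (β ^ k * Real.sqrt V + Real.sqrt (B * η)))
          + η * (L' / ε) * D k + L' / ε * sd * η ^ 2 := by
      intro i
      rw [hsub, hsub, hsub]
      have h1 := hxu k i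
      have h2 : |gc (x η k) i - gc (y ((k:ℝ) * η)) i| ≤ L' / ε * D k := hgclip _ _ i
      have h2' : |η * (gc (x η k) i - gc (y ((k:ℝ) * η)) i)| ≤ η * (L' / ε * D k) := by
        rw [abs_mul, abs_of_pos hη]
        exact mul_le_mul_of_nonneg_left h2 hη.le
      have h3 : |y ((k:ℝ) * η + η) i - y ((k:ℝ) * η) i - η * gc (y ((k:ℝ) * η)) i|
          ≤ L' / ε * sd * η ^ 2 := by
        have hh := hykey ((k:ℝ) * η) ((k:ℝ) * η + η) ha0 (by linarith) i
        rw [show (k:ℝ) * η + η - (k:ℝ) * η = η by ring] at hh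
        exact hh
      calc |x η (k+1) i - y ((k:ℝ) * η + η) i - (x η k i - y ((k:ℝ) * η) i)|
          = |(x η (k+1) i - x η k i - η * gc (x η k) i)
              + η * (gc (x η k) i - gc (y ((k:ℝ) * η)) i)
              - (y ((k:ℝ) * η + η) i - y ((k:ℝ) * η) i - η * gc (y ((k:ℝ) * η)) i)| := by
            ring_nf
        _ ≤ |x η (k+1) i - x η k i - η * gc (x η k) i|
              + |η * (gc (x η k) i - gc (y ((k:ℝ) * η)) i)|
              + |y ((k:ℝ) * η + η) i - y ((k:ℝ) * η) i - η * gc (y ((k:ℝ) * η)) i| := tri3 _ _ _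
        _ ≤ η * (M / ε ^ 2 * (β ^ k * Real.sqrt V + Real.sqrt (B * η)))
              + η * (L' / ε) * D k + L' / ε * sd * η ^ 2 := by
            have : η * (L' / ε * D k) = η * (L' / ε) * D k := by ring
            linarith [h1, h2', h3]
    have hrest : ‖(x η (k+1) - y ((k:ℝ) * η + η)) - (x η k - y ((k:ℝ) * η))‖
        ≤ sd * (η * (M / ε ^ 2 * (β ^ k * Real.sqrt V + Real.sqrt (B * η)))
          + η * (L' / ε) * D k + L' / ε * sd * η ^ 2) := by
      rw [hsddef]
      exact norm_le_sqrtd _ hcb0 hresti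
    have hid : x η (k+1) - y ((k+1:ℕ) * η)
        = (x η k - y ((k:ℝ) * η))
          + ((x η (k+1) - y ((k:ℝ) * η + η)) - (x η k - y ((k:ℝ) * η))) := by
      have : ((k+1:ℕ) : ℝ) * η = (k:ℝ) * η + η := by push_cast; ring
      rw [this]
      abel
    calc D (k+1) = ‖x η (k+1) - y ((k+1:ℕ) * η)‖ := rfl
      _ = ‖(x η k - y ((k:ℝ) * η))
          + ((x η (k+1) - y ((k:ℝ) * η + η)) - (x η k - y ((k:ℝ) * η)))‖ := by rw [hid]
      _ ≤ D k + ‖(x η (k+1) - y ((k:ℝ) * η + η)) - (x η k - y ((k:ℝ) * η))‖ := norm_add_le _ _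
      _ ≤ D k + sd * (η * (M / ε ^ 2 * (β ^ k * Real.sqrt V + Real.sqrt (B * η)))
          + η * (L' / ε) * D k + L' / ε * sd * η ^ 2) := by linarith [hrest]
      _ = (1 + η * Λ) * D k + η * (P * β ^ k + Q η) := by
          simp only [hΛdef, hPdef, hQdef]
          ring
  have hgrow : ∀ k : ℕ, D k ≤ (1 + η * Λ) ^ k
      * (η * P * (∑ j ∈ Finset.range k, β ^ j) + (k:ℝ) * η * Q η) := by
    intro k
    induction k with
    | zero =>
      have : D 0 = 0 := by
        simp only [hDdef]
        rw [hx0 η hη]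
        norm_num
        rw [hy0]
        simp
      rw [this]
      norm_num
    | succ k ih =>
      have hbase : (1:ℝ) ≤ 1 + η * Λ := by nlinarith [mul_nonneg hη.le hΛ0]
      have hone : (1:ℝ) ≤ (1 + η * Λ) ^ (k+1) := one_le_pow₀ hbase
      have h2 : (1 + η * Λ) * D k
          ≤ (1 + η * Λ) * ((1 + η * Λ) ^ k
            * (η * P * (∑ j ∈ Finset.range k, β ^ j) + (k:ℝ) * η * Q η)) :=
        mul_le_mul_of_nonneg_left ih (by linarith)
      have hkey : 0 ≤ ((1 + η * Λ) ^ (k+1) - 1) * (η * (P * β ^ k + Q η)) := by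
        apply mul_nonneg (by linarith)
        apply mul_nonneg hη.le
        exact add_nonneg (mul_nonneg hP0 (pow_nonneg hβ0 k)) (hQ0 η hη.le)
      have hps : (1 + η * Λ) * (1 + η * Λ) ^ k = (1 + η * Λ) ^ (k+1) := by
        rw [pow_succ]; ring
      rw [Finset.sum_range_succ]
      have hexp : (1 + η * Λ) ^ (k+1)
          * (η * P * ((∑ j ∈ Finset.range k, β ^ j) + β ^ k) + ((k:ℝ)+1) * η * Q η)
          = (1 + η * Λ) * ((1 + η * Λ) ^ k
            * (η * P * (∑ j ∈ Finset.range k, β ^ j) + (k:ℝ) * η * Q η))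
            + (1 + η * Λ) ^ (k+1) * (η * (P * β ^ k + Q η)) := by
        rw [← hps]; ring
      push_cast
      rw [hexp]
      have := hrec k
      linarith
  -- conclude for the given t
  obtain ⟨ht0, htT⟩ := ht
  have hk1 : ((⌊t / η⌋₊:ℝ)) * η ≤ t := by
    rw [← le_div_iff₀ hη]
    exact Nat.floor_le (by positivity)
  have hk2 : t < ((⌊t / η⌋₊:ℝ) + 1) * η := by
    rw [← div_lt_iff₀ hη]
    exact Nat.lt_floor_add_one _
  set k : ℕ := ⌊t / η⌋₊ with hkdef
  have hXt : X η t = x η k := hX η hη t ht0 k ⟨hk1, hk2⟩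
  have hkT : (k:ℝ) * η ≤ T := le_trans hk1 htT
  have hSk : (∑ j ∈ Finset.range k, β ^ j) ≤ 1 / (1 - β) := by
    rw [le_div_iff₀ (by linarith : (0:ℝ) < 1 - β)]
    have hgs := geom_sum_mul β k
    nlinarith [pow_nonneg hβ0 k]
  have hSk0 : 0 ≤ ∑ j ∈ Finset.range k, β ^ j :=
    Finset.sum_nonneg fun j _ => pow_nonneg hβ0 j
  have hpow : (1 + η * Λ) ^ k ≤ Real.exp (Λ * T) := by
    have hb1 : 1 + η * Λ ≤ Real.exp (η * Λ) := by
      have := Real.add_one_le_exp (η * Λ)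
      linarith
    calc (1 + η * Λ) ^ k ≤ (Real.exp (η * Λ)) ^ k :=
          pow_le_pow_left₀ (by nlinarith [mul_nonneg hη.le hΛ0]) hb1 k
      _ = Real.exp ((k:ℝ) * (η * Λ)) := (Real.exp_nat_mul _ k).symm
      _ ≤ Real.exp (Λ * T) := by
          apply Real.exp_le_exp.mpr
          nlinarith [mul_le_mul_of_nonneg_right hkT hΛ0]
  have hDk : D k ≤ Real.exp (Λ * T) * (η * P / (1 - β) + T * Q η) := by
    have hinner : η * P * (∑ j ∈ Finset.range k, β ^ j) + (k:ℝ) * η * Q η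
        ≤ η * P / (1 - β) + T * Q η := by
      apply add_le_add
      · calc η * P * (∑ j ∈ Finset.range k, β ^ j) ≤ η * P * (1 / (1 - β)) :=
              mul_le_mul_of_nonneg_left hSk (mul_nonneg hη.le hP0)
          _ = η * P / (1 - β) := by ring
      · exact mul_le_mul_of_nonneg_right hkT (hQ0 η hη.le)
    have hinner0 : 0 ≤ η * P * (∑ j ∈ Finset.range k, β ^ j) + (k:ℝ) * η * Q η := by
      apply add_nonneg
      · exact mul_nonneg (mul_nonneg hη.le hP0) hSk0
      · exact mul_nonneg (mul_nonneg (Nat.cast_nonneg k) hη.le) (hQ0 η hη.le)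
    calc D k ≤ (1 + η * Λ) ^ k
        * (η * P * (∑ j ∈ Finset.range k, β ^ j) + (k:ℝ) * η * Q η) := hgrow k
      _ ≤ Real.exp (Λ * T) * (η * P / (1 - β) + T * Q η) :=
          mul_le_mul hpow hinner hinner0 (Real.exp_nonneg _)
  have hyt : ‖y ((k:ℝ) * η) - y t‖ ≤ sd * η := by
    rw [norm_sub_rev]
    calc ‖y t - y ((k:ℝ) * η)‖ ≤ sd * (t - (k:ℝ) * η) :=
          hynorm ((k:ℝ) * η) t (by positivity) hk1
      _ ≤ sd * η := by
          apply mul_le_mul_of_nonneg_left _ hsd0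
          nlinarith [hk2]
  calc ‖X η t - y t‖ = ‖(x η k - y ((k:ℝ) * η)) + (y ((k:ℝ) * η) - y t)‖ := by
        rw [hXt]; congr 1; abel
    _ ≤ ‖x η k - y ((k:ℝ) * η)‖ + ‖y ((k:ℝ) * η) - y t‖ := norm_add_le _ _
    _ ≤ Real.exp (Λ * T) * (η * P / (1 - β) + T * Q η) + sd * η := add_le_add hDk hyt
    _ = Φ η := by simp only [hΦdef]
end

section
/- Let f : ℝ^d → ℝ be differentiable with ∇f bounded by M and L-Lipschitz. Fix α, β ∈ (0,1), ε > 0, x₀ ∈ ℝ^d, m₀ ∈ ℝ^d and v₀ ∈ ℝ^d with v₀ ≥ 0 componentwise. For each learning rate η > 0 let (x_k^η) be the Adam iterates started from (x₀, m₀, v₀), and let X^η : [0,∞) → ℝ^d be the piecewise-constant interpolation X^η(t) = x_k^η for t ∈ [kη, (k+1)η). Let x : [0,∞) → ℝ^d be a solution of the ODE ẋ = −∇f(x)/(|∇f(x)| + ε) (componentwise) with x(0) = x₀. Then for every T > 0, lim_{η→0} sup_{t∈[0,T]} ‖X^η(t) − x(t)‖ = 0. -/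
/-!
Adam is a perturbed explicit Euler scheme for `ẋ = -∇f(x) / (|∇f(x)| + ε)`. A step moves `x` by
`O(η)`, so along the iterates each gradient coordinate changes by `O(η)` per step, and the
bias-corrected moving averages `m̂`, `v̂` track `∇f(x_k)` and `∇f(x_k)²` up to a transient of
order `γ ^ k`, `γ = max β √α`, plus `O(η)`. Since `|√a - √b| ≤ √|a - b|`, the Adam direction
differs from the ODE field at `x_k` by `O(γ ^ k + √η)`. The field is Lipschitz and bounded, so the
discrete Grönwall inequality turns these one-step defects into a global error `O(√η)` on `[0, T]`;
the transient only contributes `η ∑ γ ^ k = O(η)`.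
-/

open Real Set Filter Topology

namespace Real

theorem le_sqrt_sq_self (x : ℝ) : x ≤ √x ^ 2 := by
  rcases le_total 0 x with hx | hx
  · rw [sq_sqrt hx]
  · exact hx.trans (sq_nonneg _)

theorem sqrt_add_le_sqrt_add_sqrt (x y : ℝ) : √(x + y) ≤ √x + √y := by
  rw [sqrt_le_left (by positivity)]
  nlinarith [le_sqrt_sq_self x, le_sqrt_sq_self y, sqrt_nonneg x, sqrt_nonneg y]

theorem abs_sqrt_sub_sqrt_le (a b : ℝ) : |√a - √b| ≤ √|a - b| := by
  wlog hba : b ≤ a generalizing a b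
  · rw [abs_sub_comm, abs_sub_comm a]
    exact this b a (le_of_not_ge hba)
  have hsplit : √a ≤ √b + √(a - b) := by simpa using sqrt_add_le_sqrt_add_sqrt b (a - b)
  rw [abs_of_nonneg (sub_nonneg.2 (sqrt_le_sqrt hba)), abs_of_nonneg (sub_nonneg.2 hba)]
  linarith

end Real

theorem abs_div_add_sub_div_add_le {ε s r : ℝ} (hε : 0 < ε) (hs : 0 ≤ s) (hr : 0 ≤ r)
    (a b : ℝ) : |a / (s + ε) - b / (r + ε)| ≤ (|a - b| + |b / (r + ε)| * |r - s|) / ε := by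
  have hsε : 0 < s + ε := by positivity
  have hrε : 0 < r + ε := by positivity
  have hsplit : a / (s + ε) - b / (r + ε) = (a - b + b / (r + ε) * (r - s)) / (s + ε) := by
    field_simp
    ring
  rw [hsplit, abs_div, abs_of_pos hsε]
  calc |a - b + b / (r + ε) * (r - s)| / (s + ε)
      ≤ (|a - b| + |b / (r + ε)| * |r - s|) / (s + ε) := by
        gcongr
        exact (abs_add_le _ _).trans_eq (by rw [abs_mul])
    _ ≤ _ := by gcongr; linarith

noncomputable def smoothSign (ε a : ℝ) : ℝ := a / (|a| + ε)

theorem abs_smoothSign_le_one {ε : ℝ} (hε : 0 ≤ ε) (a : ℝ) : |smoothSign ε a| ≤ 1 := by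
  rw [smoothSign, abs_div, abs_of_nonneg (by positivity : 0 ≤ |a| + ε)]
  exact div_le_one_of_le₀ (by linarith) (by positivity)

theorem abs_smoothSign_sub_le {ε : ℝ} (hε : 0 < ε) (a b : ℝ) :
    |smoothSign ε a - smoothSign ε b| ≤ 2 / ε * |a - b| := by
  have hab : |(|b| - |a|)| ≤ |a - b| := by
    rw [abs_sub_comm a]
    exact abs_abs_sub_abs_le_abs_sub b a
  calc |smoothSign ε a - smoothSign ε b|
      ≤ (|a - b| + |smoothSign ε b| * |(|b| - |a|)|) / ε :=
        abs_div_add_sub_div_add_le hε (abs_nonneg a) (abs_nonneg b) a b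
    _ ≤ (|a - b| + 1 * |a - b|) / ε := by
        gcongr
        exact abs_smoothSign_le_one hε.le b
    _ = 2 / ε * |a - b| := by ring

theorem abs_div_sqrt_add_sub_smoothSign_le {ε : ℝ} (hε : 0 < ε) (p q b : ℝ) :
    |p / (√q + ε) - smoothSign ε b| ≤ (|p - b| + √|q - b ^ 2|) / ε := by
  have hsqrt : |(|b| - √q)| ≤ √|q - b ^ 2| := by
    have h := abs_sqrt_sub_sqrt_le (b ^ 2) q
    rwa [sqrt_sq_eq_abs, abs_sub_comm (b ^ 2) q] at h
  calc |p / (√q + ε) - smoothSign ε b|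
      ≤ (|p - b| + |smoothSign ε b| * |(|b| - √q)|) / ε :=
        abs_div_add_sub_div_add_le hε (sqrt_nonneg q) (abs_nonneg b) p b
    _ ≤ (|p - b| + 1 * √|q - b ^ 2|) / ε := by
        gcongr
        exact abs_smoothSign_le_one hε.le b
    _ = _ := by rw [one_mul]

theorem le_pow_mul_add_div_of_le_mul_add {e : ℕ → ℝ} {r δ : ℝ} (hr₀ : 0 ≤ r) (hr₁ : r < 1)
    (hδ : 0 ≤ δ) (he : ∀ k, e (k + 1) ≤ r * e k + δ) (k : ℕ) :
    e k ≤ r ^ k * e 0 + δ / (1 - r) := by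
  have h1r : 0 < 1 - r := sub_pos.2 hr₁
  induction k with
  | zero => simpa using div_nonneg hδ h1r.le
  | succ k ih =>
    calc e (k + 1) ≤ r * e k + δ := he k
      _ ≤ r * (r ^ k * e 0 + δ / (1 - r)) + δ := by gcongr
      _ = r ^ (k + 1) * e 0 + δ / (1 - r) := by field_simp; ring

theorem one_sub_le_one_sub_pow_succ {β : ℝ} (hβ₀ : 0 ≤ β) (hβ₁ : β ≤ 1) (k : ℕ) :
    1 - β ≤ 1 - β ^ (k + 1) :=
  sub_le_sub_left (pow_le_of_le_one hβ₀ hβ₁ k.succ_ne_zero) 1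

section ExpMovingAverage

variable {β δ M : ℝ} {u g : ℕ → ℝ}

theorem abs_ema_le (hβ₀ : 0 ≤ β) (hβ₁ : β < 1)
    (hu : ∀ k, u (k + 1) = β * u k + (1 - β) * g k) (hg : ∀ k, |g k| ≤ M) (k : ℕ) :
    |u k| ≤ β ^ k * |u 0| + M := by
  have h1β : 0 < 1 - β := sub_pos.2 hβ₁
  have hM : 0 ≤ M := (abs_nonneg _).trans (hg 0)
  have hstep (k : ℕ) : |u (k + 1)| ≤ β * |u k| + (1 - β) * M := by
    rw [hu]
    refine (abs_add_le _ _).trans ?_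
    rw [abs_mul, abs_mul, abs_of_nonneg hβ₀, abs_of_pos h1β]
    gcongr
    exact hg k
  simpa [h1β.ne'] using le_pow_mul_add_div_of_le_mul_add (e := fun k ↦ |u k|) hβ₀ hβ₁
    (mul_nonneg h1β.le hM) hstep k

theorem abs_ema_div_le (hβ₀ : 0 ≤ β) (hβ₁ : β < 1)
    (hu : ∀ k, u (k + 1) = β * u k + (1 - β) * g k) (hg : ∀ k, |g k| ≤ M) (k : ℕ) :
    |u (k + 1) / (1 - β ^ (k + 1))| ≤ (β * |u 0| + M) / (1 - β) := by
  have h1β := one_sub_le_one_sub_pow_succ hβ₀ hβ₁.le k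
  have hpos : 0 < 1 - β := sub_pos.2 hβ₁
  have hM : 0 ≤ M := (abs_nonneg _).trans (hg 0)
  rw [abs_div, abs_of_pos (hpos.trans_le h1β)]
  gcongr
  calc |u (k + 1)| ≤ β ^ (k + 1) * |u 0| + M := abs_ema_le hβ₀ hβ₁ hu hg (k + 1)
    _ ≤ β * |u 0| + M := by gcongr; exact pow_le_of_le_one hβ₀ hβ₁.le k.succ_ne_zero

theorem abs_ema_sub_le (hβ₀ : 0 ≤ β) (hβ₁ : β < 1)
    (hu : ∀ k, u (k + 1) = β * u k + (1 - β) * g k) (hg : ∀ k, |g (k + 1) - g k| ≤ δ)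
    (k : ℕ) : |u (k + 1) - (1 - β ^ (k + 1)) * g k| ≤ β ^ (k + 1) * |u 0| + δ / (1 - β) := by
  have hδ : 0 ≤ δ := (abs_nonneg _).trans (hg 0)
  have hstep (k : ℕ) : |u (k + 2) - (1 - β ^ (k + 2)) * g (k + 1)|
      ≤ β * |u (k + 1) - (1 - β ^ (k + 1)) * g k| + δ := by
    have hsplit : u (k + 2) - (1 - β ^ (k + 2)) * g (k + 1)
        = β * (u (k + 1) - (1 - β ^ (k + 1)) * g k)
          - β * (1 - β ^ (k + 1)) * (g (k + 1) - g k) := by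
      rw [hu (k + 1)]
      ring
    have hweight : 0 ≤ β * (1 - β ^ (k + 1)) ∧ β * (1 - β ^ (k + 1)) ≤ 1 := by
      have := one_sub_le_one_sub_pow_succ hβ₀ hβ₁.le k
      have := pow_nonneg hβ₀ (k + 1)
      constructor <;> nlinarith
    rw [hsplit]
    refine (abs_sub _ _).trans ?_
    rw [abs_mul, abs_mul, abs_of_nonneg hβ₀, abs_of_nonneg hweight.1]
    gcongr
    calc β * (1 - β ^ (k + 1)) * |g (k + 1) - g k| ≤ 1 * δ := by
          gcongr
          · exact hweight.2
          · exact hg k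
      _ = δ := one_mul δ
  have h0 : |u 1 - (1 - β ^ 1) * g 0| = β * |u 0| := by
    rw [hu 0, pow_one, show β * u 0 + (1 - β) * g 0 - (1 - β) * g 0 = β * u 0 by ring,
      abs_mul, abs_of_nonneg hβ₀]
  have := le_pow_mul_add_div_of_le_mul_add
    (e := fun k ↦ |u (k + 1) - (1 - β ^ (k + 1)) * g k|) hβ₀ hβ₁ hδ hstep k
  simp only [zero_add, h0] at this
  rwa [← mul_assoc, ← pow_succ] at this

theorem abs_ema_div_sub_le (hβ₀ : 0 ≤ β) (hβ₁ : β < 1)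
    (hu : ∀ k, u (k + 1) = β * u k + (1 - β) * g k) (hg : ∀ k, |g (k + 1) - g k| ≤ δ)
    (k : ℕ) :
    |u (k + 1) / (1 - β ^ (k + 1)) - g k| ≤ (β ^ (k + 1) * |u 0| + δ / (1 - β)) / (1 - β) := by
  have h1β := one_sub_le_one_sub_pow_succ hβ₀ hβ₁.le k
  have hpos : 0 < 1 - β := sub_pos.2 hβ₁
  have hδ : 0 ≤ δ := (abs_nonneg _).trans (hg 0)
  rw [div_sub' (hpos.trans_le h1β).ne', abs_div, abs_of_pos (hpos.trans_le h1β)]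
  exact div_le_div₀ (by positivity) (abs_ema_sub_le hβ₀ hβ₁ hu hg k) hpos h1β

end ExpMovingAverage

theorem pow_succ_mul_add_div_le {β γ P a η : ℝ} (hβ₀ : 0 ≤ β) (hβ₁ : β < 1) (hβγ : β ≤ γ)
    (hP : 0 ≤ P) (ha : 0 ≤ a) (hη : η ≤ 1) (k : ℕ) :
    (β ^ (k + 1) * P + a * η / (1 - β)) / (1 - β)
      ≤ P / (1 - β) * γ ^ k + a / (1 - β) ^ 2 * √η := by
  have h1β := sub_pos.2 hβ₁
  have hβk : β ^ (k + 1) ≤ γ ^ k :=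
    (pow_le_pow_of_le_one hβ₀ hβ₁.le k.le_succ).trans (pow_le_pow_left₀ hβ₀ hβγ k)
  calc _ = P / (1 - β) * β ^ (k + 1) + a / (1 - β) ^ 2 * η := by field_simp
    _ ≤ _ := by gcongr; exact le_sqrt_self_iff.2 hη

theorem sqrt_pow_succ_mul_add_div_le {α γ Q b η : ℝ} (hα₀ : 0 ≤ α) (hα₁ : α < 1) (hγ : 0 ≤ γ)
    (hαγ : α ≤ γ ^ 2) (hQ : 0 ≤ Q) (hb : 0 ≤ b) (hη : 0 ≤ η) (k : ℕ) :
    √((α ^ (k + 1) * Q + b * η / (1 - α)) / (1 - α))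
      ≤ √(Q / (1 - α)) * γ ^ k + √b / (1 - α) * √η := by
  have h1α := sub_pos.2 hα₁
  have hαk : α ^ (k + 1) ≤ (γ ^ k) ^ 2 :=
    calc α ^ (k + 1) ≤ α ^ k := pow_le_pow_of_le_one hα₀ hα₁.le k.le_succ
      _ ≤ (γ ^ 2) ^ k := by gcongr
      _ = (γ ^ k) ^ 2 := by ring
  have hsplit : (α ^ (k + 1) * Q + b * η / (1 - α)) / (1 - α)
      = α ^ (k + 1) * (Q / (1 - α)) + (√b / (1 - α) * √η) ^ 2 := by
    rw [mul_pow, div_pow, sq_sqrt hb, sq_sqrt hη]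
    field_simp
  calc _ ≤ √((γ ^ k) ^ 2 * (Q / (1 - α)) + (√b / (1 - α) * √η) ^ 2) := by
        rw [hsplit]
        gcongr
    _ ≤ √((γ ^ k) ^ 2 * (Q / (1 - α))) + √((√b / (1 - α) * √η) ^ 2) :=
        sqrt_add_le_sqrt_add_sqrt _ _
    _ = _ := by
        rw [sqrt_mul (by positivity), sqrt_sq (by positivity), sqrt_sq (by positivity), mul_comm]

namespace EuclideanSpace

variable {ι : Type*} [Fintype ι]

theorem abs_apply_le_norm (w : EuclideanSpace ℝ ι) (i : ι) : |w i| ≤ ‖w‖ := by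
  simpa using PiLp.norm_apply_le w i

theorem norm_le_sqrt_card_mul {w : EuclideanSpace ℝ ι} {c : ℝ} (h : ∀ i, |w i| ≤ c) :
    ‖w‖ ≤ √(Fintype.card ι) * c := by
  rcases isEmpty_or_nonempty ι with hι | ⟨⟨i₀⟩⟩
  · simp [Subsingleton.elim w 0]
  have hc : 0 ≤ c := (abs_nonneg _).trans (h i₀)
  rw [norm_eq, ← sqrt_sq hc, ← sqrt_mul (Nat.cast_nonneg _)]
  refine sqrt_le_sqrt ?_
  calc ∑ i, ‖w i‖ ^ 2 ≤ ∑ _i : ι, c ^ 2 := by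
        gcongr with i
        rw [Real.norm_eq_abs]
        exact h i
    _ = Fintype.card ι * c ^ 2 := by simp

theorem norm_le_mul_norm_of_abs_apply_le {v w : EuclideanSpace ℝ ι} {c : ℝ} (hc : 0 ≤ c)
    (h : ∀ i, |v i| ≤ c * |w i|) : ‖v‖ ≤ c * ‖w‖ := by
  rw [norm_eq, norm_eq, ← sqrt_sq hc, ← sqrt_mul (sq_nonneg c), Finset.mul_sum]
  refine sqrt_le_sqrt (Finset.sum_le_sum fun i _ ↦ ?_)
  rw [Real.norm_eq_abs, Real.norm_eq_abs, ← mul_pow]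
  exact pow_le_pow_left₀ (abs_nonneg _) (h i) 2

theorem hasDerivAt_iff {y : ℝ → EuclideanSpace ℝ ι} {y' : EuclideanSpace ℝ ι} {t : ℝ} :
    HasDerivAt y y' t ↔ ∀ i, HasDerivAt (fun s ↦ y s i) (y' i) t := by
  rw [← hasDerivAt_pi]
  constructor
  · intro h
    exact (PiLp.hasFDerivAt_ofLp 2 (y t)).comp_hasDerivAt t h
  · intro h
    exact (PiLp.hasFDerivAt_toLp 2 _).comp_hasDerivAt t h

end EuclideanSpace

section PerturbedEuler

variable {E : Type*} [NormedAddCommGroup E] [NormedSpace ℝ E] {V : E → E} {K : NNReal} {B : ℝ}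
  {y : ℝ → E}

theorem norm_flow_sub_le (hV : ∀ z, ‖V z‖ ≤ B) (hy : ∀ t, 0 ≤ t → HasDerivAt y (V (y t)) t)
    {s t : ℝ} (hs : 0 ≤ s) (hst : s ≤ t) : ‖y t - y s‖ ≤ B * (t - s) :=
  norm_image_sub_le_of_norm_deriv_le_segment'
    (fun u hu ↦ (hy u (hs.trans hu.1)).hasDerivWithinAt) (fun u _ ↦ hV (y u)) t ⟨hst, le_rfl⟩

theorem norm_flow_sub_sub_smul_le (hVK : LipschitzWith K V) (hV : ∀ z, ‖V z‖ ≤ B)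
    (hy : ∀ t, 0 ≤ t → HasDerivAt y (V (y t)) t) {s h : ℝ} (hs : 0 ≤ s) (hh : 0 ≤ h) :
    ‖y (s + h) - y s - h • V (y s)‖ ≤ K * B * h ^ 2 := by
  have hB : 0 ≤ B := (norm_nonneg _).trans (hV 0)
  have hderiv (u : ℝ) (hu : u ∈ Icc s (s + h)) :
      HasDerivWithinAt (fun u ↦ y u - (u - s) • V (y s)) (V (y u) - V (y s)) (Icc s (s + h)) u := by
    have := (hy u (hs.trans hu.1)).sub (((hasDerivAt_id u).sub_const s).smul_const (V (y s)))
    rw [one_smul] at this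
    exact this.hasDerivWithinAt
  have hbound (u : ℝ) (hu : u ∈ Ico s (s + h)) : ‖V (y u) - V (y s)‖ ≤ K * B * h :=
    calc ‖V (y u) - V (y s)‖ ≤ K * ‖y u - y s‖ := hVK.norm_sub_le _ _
      _ ≤ K * (B * (u - s)) := by gcongr; exact norm_flow_sub_le hV hy hs hu.1
      _ ≤ K * B * h := by rw [← mul_assoc]; gcongr; linarith [hu.2]
  have := norm_image_sub_le_of_norm_deriv_le_segment' hderiv hbound (s + h) ⟨by linarith, le_rfl⟩
  rw [add_sub_cancel_left, sub_self, zero_smul, sub_zero] at this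
  calc ‖y (s + h) - y s - h • V (y s)‖ = ‖y (s + h) - h • V (y s) - y s‖ := by
        rw [sub_right_comm]
    _ ≤ K * B * h * h := this
    _ = K * B * h ^ 2 := by ring

theorem norm_euler_step_sub_flow_le (hVK : LipschitzWith K V) (hV : ∀ z, ‖V z‖ ≤ B)
    (hy : ∀ t, 0 ≤ t → HasDerivAt y (V (y t)) t) {s η D : ℝ} (hs : 0 ≤ s) (hη : 0 ≤ η)
    {x x' : E} (hx : ‖x' - x - η • V x‖ ≤ η * D) :
    ‖x' - y (s + η)‖ ≤ (1 + η * K) * ‖x - y s‖ + η * (D + K * B * η) := by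
  have hsplit : x' - y (s + η) = (x - y s) + (x' - x - η • V x)
      - (y (s + η) - y s - η • V (y s)) + η • (V x - V (y s)) := by
    rw [smul_sub]
    abel
  have hlip : ‖η • (V x - V (y s))‖ ≤ η * (K * ‖x - y s‖) := by
    rw [norm_smul, norm_of_nonneg hη]
    gcongr
    exact hVK.norm_sub_le _ _
  calc ‖x' - y (s + η)‖
      ≤ ‖x - y s‖ + η * D + K * B * η ^ 2 + η * (K * ‖x - y s‖) := by
        rw [hsplit]
        refine (norm_add_le _ _).trans (add_le_add ?_ hlip)
        refine (norm_sub_le _ _).trans (add_le_add ?_ (norm_flow_sub_sub_smul_le hVK hV hy hs hη))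
        exact (norm_add_le _ _).trans (add_le_add le_rfl hx)
    _ = _ := by ring

theorem norm_euler_sub_flow_le (hVK : LipschitzWith K V) (hV : ∀ z, ‖V z‖ ≤ B)
    (hy : ∀ t, 0 ≤ t → HasDerivAt y (V (y t)) t) {η : ℝ} (hη : 0 ≤ η) {x : ℕ → E}
    {D : ℕ → ℝ} (hD : ∀ k, 0 ≤ D k) (hx : ∀ k, ‖x (k + 1) - x k - η • V (x k)‖ ≤ η * D k)
    (h0 : x 0 = y 0) (k : ℕ) :
    ‖x k - y (k * η)‖
      ≤ (∑ j ∈ Finset.range k, η * (D j + K * B * η)) * exp (k * (η * K)) := by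
  have hB : 0 ≤ B := (norm_nonneg _).trans (hV 0)
  have hstep (j : ℕ) (_ : j ≥ 0) : ‖x (j + 1) - y ((j + 1 : ℕ) * η)‖
      ≤ (1 + η * K) * ‖x j - y (j * η)‖ + η * (D j + K * B * η) := by
    rw [Nat.cast_succ, add_mul, one_mul]
    exact norm_euler_step_sub_flow_le hVK hV hy (by positivity) hη (hx j)
  have := discrete_gronwall (u := fun j ↦ ‖x j - y (j * η)‖) (norm_nonneg _) hstep
    (fun _ _ ↦ by positivity) (fun j _ ↦ by have := hD j; positivity) (Nat.zero_le k)
  simpa [h0, ← Finset.range_eq_Ico] using this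

theorem norm_euler_sub_flow_le_mul_sqrt (hVK : LipschitzWith K V) (hV : ∀ z, ‖V z‖ ≤ B)
    (hy : ∀ t, 0 ≤ t → HasDerivAt y (V (y t)) t) {η A γ c T : ℝ} (hη : η ∈ Ioc 0 1)
    (hγ₀ : 0 ≤ γ) (hγ₁ : γ < 1) (hA : 0 ≤ A) (hc : 0 ≤ c) {x : ℕ → E}
    (hx : ∀ k, ‖x (k + 1) - x k - η • V (x k)‖ ≤ η * (A * γ ^ k + c * √η))
    (h0 : x 0 = y 0) {k : ℕ} (hk : k * η ≤ T) :
    ‖x k - y (k * η)‖ ≤ exp (T * K) * (A / (1 - γ) + T * (c + K * B)) * √η := by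
  obtain ⟨hη₀, hη₁⟩ := hη
  have hB : 0 ≤ B := (norm_nonneg _).trans (hV 0)
  have hT : 0 ≤ T := (by positivity : (0 : ℝ) ≤ k * η).trans hk
  have hη_sqrt : η ≤ √η := le_sqrt_self_iff.2 hη₁
  have hgeom : ∑ j ∈ Finset.range k, γ ^ j ≤ 1 / (1 - γ) := by
    have := geom_sum_Ico_le_of_lt_one (K := ℝ) (m := 0) (n := k) hγ₀ hγ₁
    rwa [← Finset.range_eq_Ico, pow_zero] at this
  have hsum : ∑ j ∈ Finset.range k, η * (A * γ ^ j + c * √η + K * B * η)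
      ≤ (A / (1 - γ) + T * (c + K * B)) * √η := by
    have hsplit : ∑ j ∈ Finset.range k, η * (A * γ ^ j + c * √η + K * B * η)
        = η * A * ∑ j ∈ Finset.range k, γ ^ j + k * η * (c * √η + K * B * η) := by
      simp only [Finset.sum_add_distrib, ← Finset.mul_sum, Finset.sum_const, Finset.card_range,
        nsmul_eq_mul]
      ring
    have := sub_pos.2 hγ₁
    calc _ = η * A * ∑ j ∈ Finset.range k, γ ^ j + k * η * (c * √η + K * B * η) := hsplit
      _ ≤ √η * A * (1 / (1 - γ)) + T * (c * √η + K * B * √η) := by gcongr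
      _ = _ := by ring
  have hexp : exp (k * (η * K)) ≤ exp (T * K) := by
    rw [← mul_assoc]
    gcongr
  calc ‖x k - y (k * η)‖
      ≤ (∑ j ∈ Finset.range k, η * (A * γ ^ j + c * √η + K * B * η)) * exp (k * (η * K)) :=
        norm_euler_sub_flow_le hVK hV hy hη₀.le (fun j ↦ by positivity) hx h0 k
    _ ≤ (A / (1 - γ) + T * (c + K * B)) * √η * exp (T * K) :=
        mul_le_mul hsum hexp (exp_pos _).le (by have := sub_pos.2 hγ₁; positivity)
    _ = _ := by ring

theorem norm_interp_sub_flow_le_mul_sqrt (hVK : LipschitzWith K V) (hV : ∀ z, ‖V z‖ ≤ B)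
    (hy : ∀ t, 0 ≤ t → HasDerivAt y (V (y t)) t) {η A γ c T : ℝ} (hη : η ∈ Ioc 0 1)
    (hγ₀ : 0 ≤ γ) (hγ₁ : γ < 1) (hA : 0 ≤ A) (hc : 0 ≤ c) {x : ℕ → E}
    (hx : ∀ k, ‖x (k + 1) - x k - η • V (x k)‖ ≤ η * (A * γ ^ k + c * √η))
    (h0 : x 0 = y 0) {X : ℝ → E}
    (hX : ∀ t, 0 ≤ t → ∀ k : ℕ, t ∈ Ico (k * η) ((k + 1) * η) → X t = x k)
    {t : ℝ} (ht : t ∈ Icc 0 T) :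
    ‖X t - y t‖ ≤ (exp (T * K) * (A / (1 - γ) + T * (c + K * B)) + B) * √η := by
  obtain ⟨hη₀, hη₁⟩ := hη
  have hB : 0 ≤ B := (norm_nonneg _).trans (hV 0)
  set k := ⌊t / η⌋₊
  have hk₁ : k * η ≤ t := (le_div_iff₀ hη₀).1 (Nat.floor_le (div_nonneg ht.1 hη₀.le))
  have hk₂ : t < (k + 1) * η := (div_lt_iff₀ hη₀).1 (Nat.lt_floor_add_one _)
  have hη_sqrt : η ≤ √η := le_sqrt_self_iff.2 hη₁
  rw [hX t ht.1 k ⟨hk₁, hk₂⟩]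
  calc ‖x k - y t‖ ≤ ‖x k - y (k * η)‖ + ‖y t - y (k * η)‖ := by
        rw [norm_sub_rev (y t)]
        exact norm_sub_le_norm_sub_add_norm_sub _ _ _
    _ ≤ exp (T * K) * (A / (1 - γ) + T * (c + K * B)) * √η + B * √η := by
        gcongr
        · exact norm_euler_sub_flow_le_mul_sqrt hVK hV hy ⟨hη₀, hη₁⟩ hγ₀ hγ₁ hA hc hx h0
            (hk₁.trans ht.2)
        · refine (norm_flow_sub_le hV hy (by positivity) hk₁).trans ?_
          gcongr
          linarith
    _ = _ := by ring

end PerturbedEuler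

section SignDescent

variable {ι : Type*} {G : EuclideanSpace ℝ ι → EuclideanSpace ℝ ι} {ε : ℝ}

/-- The right-hand side of the limiting ODE `ẋ = -∇f(x) / (|∇f(x)| + ε)` when `G = ∇f`. -/
noncomputable def signDescentField (ε : ℝ) (G : EuclideanSpace ℝ ι → EuclideanSpace ℝ ι)
    (z : EuclideanSpace ℝ ι) : EuclideanSpace ℝ ι :=
  WithLp.toLp 2 fun i ↦ -smoothSign ε (G z i)

@[simp]
theorem signDescentField_apply (z : EuclideanSpace ℝ ι) (i : ι) :
    signDescentField ε G z i = -smoothSign ε (G z i) :=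
  rfl

theorem norm_signDescentField_le [Fintype ι] (hε : 0 ≤ ε) (z : EuclideanSpace ℝ ι) :
    ‖signDescentField ε G z‖ ≤ √(Fintype.card ι) := by
  simpa using EuclideanSpace.norm_le_sqrt_card_mul (c := 1) fun i ↦ by
    simpa using abs_smoothSign_le_one hε (G z i)

theorem lipschitzWith_signDescentField [Fintype ι] {L : NNReal} (hε : 0 < ε)
    (hG : LipschitzWith L G) :
    LipschitzWith (Real.toNNReal (2 / ε * L)) (signDescentField ε G) := by
  refine LipschitzWith.of_dist_le' fun z w ↦ ?_
  rw [dist_eq_norm, dist_eq_norm, mul_assoc]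
  refine (EuclideanSpace.norm_le_mul_norm_of_abs_apply_le (c := 2 / ε) (by positivity)
    fun i ↦ ?_).trans
    (by gcongr; exact hG.norm_sub_le z w)
  rw [PiLp.sub_apply, PiLp.sub_apply, signDescentField_apply, signDescentField_apply,
    neg_sub_neg, abs_sub_comm]
  exact abs_smoothSign_sub_le hε (G z i) (G w i)

end SignDescent

structure IsAdamIterate {ι : Type*} (G : EuclideanSpace ℝ ι → EuclideanSpace ℝ ι)
    (α β ε η : ℝ) (x₀ m₀ v₀ : EuclideanSpace ℝ ι) (x m v : ℕ → EuclideanSpace ℝ ι) : Prop where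
  x_zero : x 0 = x₀
  m_zero : m 0 = m₀
  v_zero : v 0 = v₀
  v_succ : ∀ k i, v (k + 1) i = α * v k i + (1 - α) * G (x k) i ^ 2
  m_succ : ∀ k i, m (k + 1) i = β * m k i + (1 - β) * G (x k) i
  x_succ : ∀ k i, x (k + 1) i = x k i -
    η * (m (k + 1) i / (1 - β ^ (k + 1))) / (√(v (k + 1) i / (1 - α ^ (k + 1))) + ε)

namespace IsAdamIterate

variable {ι : Type*} {G : EuclideanSpace ℝ ι → EuclideanSpace ℝ ι}
  {α β ε η M : ℝ} {x₀ m₀ v₀ : EuclideanSpace ℝ ι} {x m v : ℕ → EuclideanSpace ℝ ι}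

theorem succ_sub_sub_smul_apply (h : IsAdamIterate G α β ε η x₀ m₀ v₀ x m v) (k : ℕ) (i : ι) :
    (x (k + 1) - x k - η • signDescentField ε G (x k)) i = η * (smoothSign ε (G (x k) i)
      - m (k + 1) i / (1 - β ^ (k + 1)) / (√(v (k + 1) i / (1 - α ^ (k + 1))) + ε)) := by
  simp only [PiLp.sub_apply, PiLp.smul_apply, signDescentField_apply, smul_eq_mul, h.x_succ]
  ring

theorem norm_succ_sub_le [Fintype ι] (h : IsAdamIterate G α β ε η x₀ m₀ v₀ x m v) (hβ : β ∈ Ioo 0 1)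
    (hε : 0 < ε) (hη : 0 ≤ η) (hM : ∀ z, ‖G z‖ ≤ M) (k : ℕ) :
    ‖x (k + 1) - x k‖ ≤ √(Fintype.card ι) * ((β * ‖m₀‖ + M) / ((1 - β) * ε) * η) := by
  refine EuclideanSpace.norm_le_sqrt_card_mul fun i ↦ ?_
  have := sub_pos.2 hβ.2
  have := hβ.1.le
  have hmhat : |m (k + 1) i / (1 - β ^ (k + 1))| ≤ (β * ‖m₀‖ + M) / (1 - β) := by
    refine (abs_ema_div_le (u := fun k ↦ m k i) (g := fun k ↦ G (x k) i) hβ.1.le hβ.2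
      (fun k ↦ h.m_succ k i) (fun k ↦ (EuclideanSpace.abs_apply_le_norm _ i).trans (hM _))
      k).trans ?_
    rw [h.m_zero]
    gcongr
    exact EuclideanSpace.abs_apply_le_norm m₀ i
  have hden : ε ≤ √(v (k + 1) i / (1 - α ^ (k + 1))) + ε :=
    le_add_of_nonneg_left (sqrt_nonneg _)
  rw [PiLp.sub_apply, h.x_succ, sub_sub_cancel_left, abs_neg, abs_div, abs_mul,
    abs_of_nonneg hη, abs_of_pos (hε.trans_le hden), div_mul_eq_mul_div, mul_comm _ η]
  have := (abs_nonneg _).trans hmhat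
  calc η * |m (k + 1) i / (1 - β ^ (k + 1))| / (√(v (k + 1) i / (1 - α ^ (k + 1))) + ε)
      ≤ η * ((β * ‖m₀‖ + M) / (1 - β)) / ε := by gcongr
    _ = _ := by field_simp

theorem abs_mhat_sub_le [Fintype ι] (h : IsAdamIterate G α β ε η x₀ m₀ v₀ x m v) (hβ : β ∈ Ioo 0 1)
    {i : ι} {δ : ℝ} (hδ : ∀ k, |G (x (k + 1)) i - G (x k) i| ≤ δ) (k : ℕ) :
    |m (k + 1) i / (1 - β ^ (k + 1)) - G (x k) i|
      ≤ (β ^ (k + 1) * ‖m₀‖ + δ / (1 - β)) / (1 - β) := by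
  refine (abs_ema_div_sub_le (u := fun k ↦ m k i) (g := fun k ↦ G (x k) i) hβ.1.le hβ.2
    (fun k ↦ h.m_succ k i) hδ k).trans ?_
  have := sub_pos.2 hβ.2
  have := hβ.1.le
  rw [h.m_zero]
  gcongr
  exact EuclideanSpace.abs_apply_le_norm m₀ i

theorem abs_vhat_sub_le [Fintype ι] (h : IsAdamIterate G α β ε η x₀ m₀ v₀ x m v) (hα : α ∈ Ioo 0 1)
    {i : ι} {δ : ℝ} (hδ : ∀ k, |G (x (k + 1)) i ^ 2 - G (x k) i ^ 2| ≤ δ) (k : ℕ) :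
    |v (k + 1) i / (1 - α ^ (k + 1)) - G (x k) i ^ 2|
      ≤ (α ^ (k + 1) * ‖v₀‖ + δ / (1 - α)) / (1 - α) := by
  refine (abs_ema_div_sub_le (u := fun k ↦ v k i) (g := fun k ↦ G (x k) i ^ 2) hα.1.le hα.2
    (fun k ↦ h.v_succ k i) hδ k).trans ?_
  have := sub_pos.2 hα.2
  have := hα.1.le
  rw [h.v_zero]
  gcongr
  exact EuclideanSpace.abs_apply_le_norm v₀ i

end IsAdamIterate

theorem exists_adam_norm_succ_sub_sub_smul_le {ι : Type*} [Fintype ι]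
    {G : EuclideanSpace ℝ ι → EuclideanSpace ℝ ι} {α β ε M : ℝ} {L : NNReal}
    (hα : α ∈ Ioo 0 1) (hβ : β ∈ Ioo 0 1) (hε : 0 < ε) (hM : ∀ z, ‖G z‖ ≤ M)
    (hG : LipschitzWith L G) (m₀ v₀ : EuclideanSpace ℝ ι) :
    ∃ A c, 0 ≤ A ∧ 0 ≤ c ∧ ∀ η ∈ Ioc 0 1, ∀ x₀ x m v, IsAdamIterate G α β ε η x₀ m₀ v₀ x m v →
      ∀ k, ‖x (k + 1) - x k - η • signDescentField ε G (x k)‖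
        ≤ η * (A * max β √α ^ k + c * √η) := by
  have hM₀ : 0 ≤ M := (norm_nonneg _).trans (hM 0)
  have h1α := sub_pos.2 hα.2
  have h1β := sub_pos.2 hβ.2
  -- `δ * η` bounds the change of a gradient coordinate over one Adam step
  set δ := L * (√(Fintype.card ι) * ((β * ‖m₀‖ + M) / ((1 - β) * ε)))
  have hδ : 0 ≤ δ := by have := hβ.1.le; positivity
  set A := (‖m₀‖ / (1 - β) + √(‖v₀‖ / (1 - α))) / ε
  set c := (δ / (1 - β) ^ 2 + √(2 * M * δ) / (1 - α)) / ε
  refine ⟨√(Fintype.card ι) * A, √(Fintype.card ι) * c, by positivity, by positivity, ?_⟩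
  rintro η ⟨hη₀, hη₁⟩ x₀ x m v h k
  set γ := max β √α
  have hαγ : α ≤ γ ^ 2 :=
    (sq_sqrt hα.1.le).symm.trans_le (pow_le_pow_left₀ (sqrt_nonneg α) (le_max_right _ _) 2)
  suffices hcoord : ∀ i, |(x (k + 1) - x k - η • signDescentField ε G (x k)) i|
      ≤ η * (A * γ ^ k + c * √η) from
    (EuclideanSpace.norm_le_sqrt_card_mul hcoord).trans_eq (by ring)
  intro i
  have hΔg (k : ℕ) : |G (x (k + 1)) i - G (x k) i| ≤ δ * η := by
    refine (EuclideanSpace.abs_apply_le_norm (G _ - G _) i).trans (hG.norm_sub_le _ _ |>.trans ?_)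
    rw [mul_assoc, mul_assoc]
    gcongr
    exact h.norm_succ_sub_le hβ hε hη₀.le hM k
  have hΔg_sq (k : ℕ) : |G (x (k + 1)) i ^ 2 - G (x k) i ^ 2| ≤ 2 * M * δ * η := by
    have hG_le (z) : |G z i| ≤ M := (EuclideanSpace.abs_apply_le_norm (G z) i).trans (hM z)
    have hsum : |G (x (k + 1)) i + G (x k) i| ≤ 2 * M :=
      (abs_add_le _ _).trans (by linarith [hG_le (x (k + 1)), hG_le (x k)])
    rw [sq_sub_sq, abs_mul, mul_assoc]
    gcongr
    exact hΔg k
  have hm : |m (k + 1) i / (1 - β ^ (k + 1)) - G (x k) i|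
      ≤ ‖m₀‖ / (1 - β) * γ ^ k + δ / (1 - β) ^ 2 * √η :=
    (h.abs_mhat_sub_le hβ hΔg k).trans (pow_succ_mul_add_div_le hβ.1.le hβ.2
      (le_max_left _ _) (norm_nonneg _) hδ hη₁ k)
  have hv : √|v (k + 1) i / (1 - α ^ (k + 1)) - G (x k) i ^ 2|
      ≤ √(‖v₀‖ / (1 - α)) * γ ^ k + √(2 * M * δ) / (1 - α) * √η :=
    (sqrt_le_sqrt (h.abs_vhat_sub_le hα hΔg_sq k)).trans
      (sqrt_pow_succ_mul_add_div_le hα.1.le hα.2 (by positivity) hαγ (norm_nonneg _)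
        (by positivity) hη₀.le k)
  rw [h.succ_sub_sub_smul_apply, abs_mul, abs_of_pos hη₀, abs_sub_comm]
  gcongr
  calc _ ≤ (|m (k + 1) i / (1 - β ^ (k + 1)) - G (x k) i|
          + √|v (k + 1) i / (1 - α ^ (k + 1)) - G (x k) i ^ 2|) / ε :=
        abs_div_sqrt_add_sub_smoothSign_le hε _ _ _
    _ ≤ (‖m₀‖ / (1 - β) * γ ^ k + δ / (1 - β) ^ 2 * √η
          + (√(‖v₀‖ / (1 - α)) * γ ^ k + √(2 * M * δ) / (1 - α) * √η)) / ε := by gcongr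
    _ = _ := by ring

theorem adam_converges_to_signGD_ode_general
    (d : ℕ) (f : EuclideanSpace ℝ (Fin d) → ℝ)
    (M L : ℝ)
    (hM : ∀ z, ‖gradient f z‖ ≤ M)
    (hL : ∀ z w, ‖gradient f z - gradient f w‖ ≤ L * ‖z - w‖)
    (α β ε : ℝ) (hα : α ∈ Set.Ioo (0 : ℝ) 1) (hβ : β ∈ Set.Ioo (0 : ℝ) 1) (hε : 0 < ε)
    (x₀ m₀ v₀ : EuclideanSpace ℝ (Fin d))
    -- the Adam iterates `x η k`, `m η k`, `v η k` for each learning rate `η > 0`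
    (x m v : ℝ → ℕ → EuclideanSpace ℝ (Fin d))
    (hx0 : ∀ η, 0 < η → x η 0 = x₀)
    (hm0 : ∀ η, 0 < η → m η 0 = m₀)
    (hv0 : ∀ η, 0 < η → v η 0 = v₀)
    (hv : ∀ η, 0 < η → ∀ k i,
      v η (k + 1) i = α * v η k i + (1 - α) * (gradient f (x η k) i) ^ 2)
    (hm : ∀ η, 0 < η → ∀ k i,
      m η (k + 1) i = β * m η k i + (1 - β) * gradient f (x η k) i)
    (hx : ∀ η, 0 < η → ∀ k i,
      x η (k + 1) i = x η k i -
        η * (m η (k + 1) i / (1 - β ^ (k + 1))) /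
          (Real.sqrt (v η (k + 1) i / (1 - α ^ (k + 1))) + ε))
    -- the piecewise-constant interpolation `X η`
    (X : ℝ → ℝ → EuclideanSpace ℝ (Fin d))
    (hX : ∀ η, 0 < η → ∀ t : ℝ, 0 ≤ t → ∀ k : ℕ,
      t ∈ Set.Ico ((k : ℝ) * η) (((k : ℝ) + 1) * η) → X η t = x η k)
    -- the solution `y` of the limiting ODE
    (y : ℝ → EuclideanSpace ℝ (Fin d))
    (hy0 : y 0 = x₀)
    (hy : ∀ t : ℝ, 0 ≤ t → ∀ i,
      HasDerivAt (fun s => y s i)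
        (-(gradient f (y t) i / (|gradient f (y t) i| + ε))) t) :
    ∀ T > (0 : ℝ), ∀ τ > (0 : ℝ), ∃ η₀ > (0 : ℝ), ∀ η, 0 < η → η < η₀ →
      ∀ t ∈ Set.Icc (0 : ℝ) T, ‖X η t - y t‖ < τ := by
  intro T _ τ hτ
  have hG : LipschitzWith (Real.toNNReal L) (gradient f) :=
    LipschitzWith.of_dist_le' fun z w ↦ by simpa only [dist_eq_norm] using hL z w
  have hflow (t : ℝ) (ht : 0 ≤ t) : HasDerivAt y (signDescentField ε (gradient f) (y t)) t :=
    EuclideanSpace.hasDerivAt_iff.2 (hy t ht)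
  have hadam (η : ℝ) (hη : 0 < η) :
      IsAdamIterate (gradient f) α β ε η x₀ m₀ v₀ (x η) (m η) (v η) :=
    ⟨hx0 η hη, hm0 η hη, hv0 η hη, hv η hη, hm η hη, hx η hη⟩
  obtain ⟨A, c, hA, hc, hdrift⟩ :=
    exists_adam_norm_succ_sub_sub_smul_le hα hβ hε hM hG m₀ v₀
  have hγ : max β √α < 1 := max_lt hβ.2 ((sqrt_lt' one_pos).2 (by simpa using hα.2))
  obtain ⟨C, hC⟩ : ∃ C, ∀ η ∈ Ioc (0 : ℝ) 1, ∀ t ∈ Icc 0 T, ‖X η t - y t‖ ≤ C * √η :=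
    ⟨_, fun η hη t ht ↦ norm_interp_sub_flow_le_mul_sqrt (lipschitzWith_signDescentField hε hG)
      (norm_signDescentField_le hε.le) hflow hη (by positivity) hγ hA hc
      (hdrift η hη _ _ _ _ (hadam η hη.1)) ((hadam η hη.1).x_zero.trans hy0.symm)
      (hX η hη.1) ht⟩
  have hsmall : Tendsto (fun η ↦ C * √η) (𝓝 0) (𝓝 0) := by
    simpa using (continuous_sqrt.tendsto 0).const_mul C
  obtain ⟨η₁, hη₁, hη₁_small⟩ := Metric.tendsto_nhds_nhds.1 hsmall τ hτ
  refine ⟨min 1 η₁, by positivity, fun η hη hηη₀ t ht ↦ ?_⟩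
  obtain ⟨hη_one, hη_η₁⟩ := lt_min_iff.1 hηη₀
  have hdist : dist η 0 < η₁ := by rwa [dist_zero_right, norm_of_nonneg hη.le]
  calc ‖X η t - y t‖ ≤ C * √η := hC η ⟨hη, hη_one.le⟩ t ht
    _ ≤ dist (C * √η) 0 := by rw [dist_zero_right]; exact le_norm_self _
    _ < τ := hη₁_small hdist

/-- Proposition 1 (Adam case): with fixed momentum factors `α, β ∈ (0,1)` and stabilizer
`ε > 0`, as the learning rate `η → 0` the piecewise-constant interpolation of the Adam
iterates converges uniformly on `[0, T]` to the solution of the ODE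
`ẋ = −∇f(x)/(|∇f(x)| + ε)` (componentwise). -/
theorem adam_converges_to_signGD_ode
    (d : ℕ) (f : EuclideanSpace ℝ (Fin d) → ℝ)
    (hf : Differentiable ℝ f)
    (M L : ℝ)
    (hM : ∀ z, ‖gradient f z‖ ≤ M)
    (hL : ∀ z w, ‖gradient f z - gradient f w‖ ≤ L * ‖z - w‖)
    (α β ε : ℝ) (hα : α ∈ Set.Ioo (0 : ℝ) 1) (hβ : β ∈ Set.Ioo (0 : ℝ) 1) (hε : 0 < ε)
    (x₀ m₀ v₀ : EuclideanSpace ℝ (Fin d)) (hv₀ : ∀ i, 0 ≤ v₀ i)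
    -- the Adam iterates `x η k`, `m η k`, `v η k` for each learning rate `η > 0`
    (x m v : ℝ → ℕ → EuclideanSpace ℝ (Fin d))
    (hx0 : ∀ η, 0 < η → x η 0 = x₀)
    (hm0 : ∀ η, 0 < η → m η 0 = m₀)
    (hv0 : ∀ η, 0 < η → v η 0 = v₀)
    (hv : ∀ η, 0 < η → ∀ k i,
      v η (k + 1) i = α * v η k i + (1 - α) * (gradient f (x η k) i) ^ 2)
    (hm : ∀ η, 0 < η → ∀ k i,
      m η (k + 1) i = β * m η k i + (1 - β) * gradient f (x η k) i)
    (hx : ∀ η, 0 < η → ∀ k i,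
      x η (k + 1) i = x η k i -
        η * (m η (k + 1) i / (1 - β ^ (k + 1))) /
          (Real.sqrt (v η (k + 1) i / (1 - α ^ (k + 1))) + ε))
    -- the piecewise-constant interpolation `X η`
    (X : ℝ → ℝ → EuclideanSpace ℝ (Fin d))
    (hX : ∀ η, 0 < η → ∀ t : ℝ, 0 ≤ t → ∀ k : ℕ,
      t ∈ Set.Ico ((k : ℝ) * η) (((k : ℝ) + 1) * η) → X η t = x η k)
    -- the solution `y` of the limiting ODE
    (y : ℝ → EuclideanSpace ℝ (Fin d))
    (hy0 : y 0 = x₀)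
    (hy : ∀ t : ℝ, 0 ≤ t → ∀ i,
      HasDerivAt (fun s => y s i)
        (-(gradient f (y t) i / (|gradient f (y t) i| + ε))) t) :
    ∀ T > (0 : ℝ), ∀ τ > (0 : ℝ), ∃ η₀ > (0 : ℝ), ∀ η, 0 < η → η < η₀ →
      ∀ t ∈ Set.Icc (0 : ℝ) T, ‖X η t - y t‖ < τ :=
  adam_converges_to_signGD_ode_general d f M L hM hL α β ε hα hβ hε x₀ m₀ v₀ x m v hx0 hm0 hv0 hv hm
    hx X hX y hy0 hy
end

section
/- Let f : ℝ^d → ℝ be continuously differentiable with f(x) ≥ 0 for all x, and suppose f satisfies the Polyak–Łojasiewicz condition ‖∇f(x)‖₂² ≥ μ f(x) for all x, with μ > 0. Let x : [0,∞) → ℝ^d be differentiable with ẋ_i(t) = −sign(∂_i f(x(t))) for every coordinate i and every t ≥ 0 (continuous-time signGD), started from x(0) = x₀. Then for every t with 0 ≤ t ≤ 2√(f(x₀))/√μ, one has f(x(t)) ≤ (√(f(x₀)) − (√μ/2) t)². -/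
/-!
Along signGD, `d/dt f(x(t)) = -‖∇f(x(t))‖₁ ≤ -‖∇f(x(t))‖₂ ≤ -√μ · √(f(x(t)))` by the PL inequality,
so `√(f(x(t)))` decreases at rate at least `√μ / 2`. As `√f` need not be differentiable where `f`
vanishes, the comparison is made for `f` itself against the barriers
`(√(f x₀) - √μ / 2 · t)² + ε (1 + t)`, which `f(x(t))` can never touch, and then `ε → 0`.
-/

open Real InnerProductSpace

theorem Real.self_mul_sign (r : ℝ) : r * Real.sign r = |r| := by
  rcases lt_trichotomy r 0 with hr | rfl | hr
  · rw [Real.sign_of_neg hr, abs_of_neg hr, mul_neg_one]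
  · simp
  · rw [Real.sign_of_pos hr, abs_of_pos hr, mul_one]

theorem Real.sqrt_mul_sqrt_le_of_mul_le_sq {μ a b : ℝ} (h : μ * a ≤ b ^ 2) (hb : 0 ≤ b) :
    √μ * √a ≤ b := by
  rcases le_or_gt μ 0 with hμ | hμ
  · rw [Real.sqrt_eq_zero'.2 hμ, zero_mul]
    exact hb
  · rw [← Real.sqrt_mul hμ.le, ← Real.sqrt_sq hb]
    exact Real.sqrt_le_sqrt h

theorem EuclideanSpace.norm_le_sum_abs {ι : Type*} [Fintype ι] (z : EuclideanSpace ℝ ι) :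
    ‖z‖ ≤ ∑ i, |z i| :=
  calc ‖z‖ = ‖∑ i, (basisFun ι ℝ).repr z i • basisFun ι ℝ i‖ := by
        rw [(basisFun ι ℝ).sum_repr]
    _ ≤ ∑ i, ‖(basisFun ι ℝ).repr z i • basisFun ι ℝ i‖ := norm_sum_le _ _
    _ = ∑ i, |z i| := by simp [norm_smul]

theorem EuclideanSpace.inner_neg_sign_eq {ι : Type*} [Fintype ι] (g : EuclideanSpace ℝ ι) :
    inner ℝ g (WithLp.toLp 2 fun i => -Real.sign (g i)) = -∑ i, |g i| := by
  simp [PiLp.inner_apply, Real.self_mul_sign, mul_comm]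

theorem hasDerivAt_euclidean {ι : Type*} [Fintype ι] {x : ℝ → EuclideanSpace ℝ ι}
    {v : EuclideanSpace ℝ ι} {t : ℝ} :
    HasDerivAt x v t ↔ ∀ i, HasDerivAt (fun s => x s i) (v i) t := by
  simp only [hasDerivAt_iff_hasFDerivAt, ← hasFDerivWithinAt_univ, hasFDerivWithinAt_euclidean]
  rfl

theorem HasGradientAt.comp_hasDerivAt {F : Type*} [NormedAddCommGroup F] [InnerProductSpace ℝ F]
    [CompleteSpace F] {f : F → ℝ} {f' : F} {x : ℝ → F} {v : F} {t : ℝ}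
    (hf : HasGradientAt f f' (x t)) (hx : HasDerivAt x v t) :
    HasDerivAt (fun s => f (x s)) (inner ℝ f' v) t :=
  (hasGradientAt_iff_hasFDerivAt.1 hf).comp_hasDerivAt t hx

theorem hasDerivAt_comp_signGD {ι : Type*} [Fintype ι] {f : EuclideanSpace ℝ ι → ℝ}
    {x : ℝ → EuclideanSpace ℝ ι} {t : ℝ} (hf : DifferentiableAt ℝ f (x t))
    (hx : ∀ i, HasDerivAt (fun s => x s i) (-Real.sign (gradient f (x t) i)) t) :
    HasDerivAt (fun s => f (x s)) (-∑ i, |gradient f (x t) i|) t := by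
  have hxv : HasDerivAt x (WithLp.toLp 2 fun i => -Real.sign (gradient f (x t) i)) t :=
    hasDerivAt_euclidean.2 hx
  simpa only [EuclideanSpace.inner_neg_sign_eq] using hf.hasGradientAt.comp_hasDerivAt hxv

section Comparison

variable {g g' : ℝ → ℝ} {k : ℝ}

theorem le_sq_add_of_hasDerivAt_le_neg_mul_sqrt (hk : 0 ≤ k)
    (hg : ∀ s, 0 ≤ s → HasDerivAt g (g' s) s) (hg' : ∀ s, 0 ≤ s → g' s ≤ -k * √(g s))
    {ε : ℝ} (hε : 0 < ε) {t : ℝ} (ht : 0 ≤ t) :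
    g t ≤ (√(g 0) - k / 2 * t) ^ 2 + ε * (1 + t) := by
  have hB (s : ℝ) : HasDerivAt (fun s => (√(g 0) - k / 2 * s) ^ 2 + ε * (1 + s))
      (-k * (√(g 0) - k / 2 * s) + ε) s := by
    refine ((((hasDerivAt_id' s).const_mul (k / 2)).const_sub √(g 0)).fun_pow 2).add
      (((hasDerivAt_id' s).const_add 1).const_mul ε) |>.congr_deriv ?_
    ring
  refine image_le_of_deriv_right_lt_deriv_boundary
    (fun s hs => (hg s hs.1).continuousAt.continuousWithinAt)
    (fun s hs => (hg s hs.1).hasDerivWithinAt) ?_ hB ?_ ⟨ht, le_rfl⟩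
  · have hg0 : g 0 ≤ √(g 0) ^ 2 := Real.sq_sqrt' ▸ le_max_left _ _
    simp only [mul_zero, sub_zero, add_zero, mul_one]
    linarith
  · intro s hs hgB
    have hsqrt : √(g 0) - k / 2 * s ≤ √(g s) :=
      Real.le_sqrt_of_sq_le <| by nlinarith [hs.1]
    calc g' s ≤ -k * √(g s) := hg' s hs.1
      _ ≤ -k * (√(g 0) - k / 2 * s) := by nlinarith
      _ < _ := by linarith

theorem le_sq_of_hasDerivAt_le_neg_mul_sqrt (hk : 0 ≤ k)
    (hg : ∀ s, 0 ≤ s → HasDerivAt g (g' s) s) (hg' : ∀ s, 0 ≤ s → g' s ≤ -k * √(g s))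
    {t : ℝ} (ht : 0 ≤ t) :
    g t ≤ (√(g 0) - k / 2 * t) ^ 2 := by
  refine le_of_forall_pos_le_add fun δ hδ => ?_
  have ht1 : 0 < 1 + t := by linarith
  simpa [div_mul_cancel₀ _ ht1.ne'] using
    le_sq_add_of_hasDerivAt_le_neg_mul_sqrt hk hg hg' (div_pos hδ ht1) ht

end Comparison

theorem signGD_fast_convergence_general
    (d : ℕ) (f : EuclideanSpace ℝ (Fin d) → ℝ)
    (hf : ContDiff ℝ 1 f)
    (μ : ℝ)
    (hPL : ∀ z, μ * f z ≤ ‖gradient f z‖ ^ 2)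
    (x₀ : EuclideanSpace ℝ (Fin d))
    (x : ℝ → EuclideanSpace ℝ (Fin d))
    (hx0 : x 0 = x₀)
    (hx : ∀ t : ℝ, 0 ≤ t → ∀ i,
      HasDerivAt (fun s => x s i) (-Real.sign (gradient f (x t) i)) t) :
    ∀ t : ℝ, 0 ≤ t → t ≤ 2 * Real.sqrt (f x₀) / Real.sqrt μ →
      f (x t) ≤ (Real.sqrt (f x₀) - Real.sqrt μ / 2 * t) ^ 2 := by
  intro t ht _
  have hfd : Differentiable ℝ f := hf.differentiable one_ne_zero
  have hderiv (s : ℝ) (hs : 0 ≤ s) :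
      HasDerivAt (fun u => f (x u)) (-∑ i, |gradient f (x s) i|) s :=
    hasDerivAt_comp_signGD (hfd _) (hx s hs)
  have hdecay (s : ℝ) (_ : 0 ≤ s) : -∑ i, |gradient f (x s) i| ≤ -√μ * √(f (x s)) := by
    have hl1 := EuclideanSpace.norm_le_sum_abs (gradient f (x s))
    have hPL' := Real.sqrt_mul_sqrt_le_of_mul_le_sq (hPL (x s)) (norm_nonneg _)
    linarith
  simpa only [hx0] using le_sq_of_hasDerivAt_le_neg_mul_sqrt (sqrt_nonneg μ) hderiv hdecay ht

/-- Proposition 3: under the PL condition `‖∇f(x)‖² ≥ μ f(x)` (with `μ > 0`, `f ≥ 0`),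
continuous-time signGD `ẋ = −sign(∇f(x))` satisfies
`f(x(t)) ≤ (√f(x₀) − (√μ/2) t)²` for `0 ≤ t ≤ 2√f(x₀)/√μ`. -/
theorem signGD_fast_convergence
    (d : ℕ) (f : EuclideanSpace ℝ (Fin d) → ℝ)
    (hf : ContDiff ℝ 1 f)
    (hfnonneg : ∀ z, 0 ≤ f z)
    (μ : ℝ) (hμ : 0 < μ)
    (hPL : ∀ z, μ * f z ≤ ‖gradient f z‖ ^ 2)
    (x₀ : EuclideanSpace ℝ (Fin d))
    (x : ℝ → EuclideanSpace ℝ (Fin d))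
    (hx0 : x 0 = x₀)
    (hx : ∀ t : ℝ, 0 ≤ t → ∀ i,
      HasDerivAt (fun s => x s i) (-Real.sign (gradient f (x t) i)) t) :
    ∀ t : ℝ, 0 ≤ t → t ≤ 2 * Real.sqrt (f x₀) / Real.sqrt μ →
      f (x t) ≤ (Real.sqrt (f x₀) - Real.sqrt μ / 2 * t) ^ 2 :=
  signGD_fast_convergence_general d f hf μ hPL x₀ x hx0 hx
end

section
/- Let f : ℝ^d → ℝ be differentiable with ‖∇f(x)‖₂ ≤ M for all x and ∇f L-Lipschitz. Fix η > 0, α ∈ (0,1), ε > 0, x₀ ∈ ℝ^d, and let (x_k, v_k) be the RMSprop iterates started from x₀ and v₀ = 0. Then for all integers k ≥ K ≥ 1 and every coordinate j, |(v_{k+1})_j − (∂_j f(x_k))²| ≤ 2 η M² L K / ε + 2 M² α^K. (The first term controls the discrepancy accumulated over the most recent K steps via the step-size bound ‖x_{k−i} − x_k‖ ≤ iηM/ε, and the second term controls the geometrically discounted tail of the memory.) -/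
set_option maxHeartbeats 1000000 in
/-- For RMSprop with `v₀ = 0`, bounded (`‖∇f‖ ≤ M`) and `L`-Lipschitz gradient, the
second moment tracks the squared gradient: for all `k ≥ K ≥ 1` and every coordinate `j`,
`|v_{k+1,j} − (∂_j f(x_k))²| ≤ 2ηM²LK/ε + 2M²α^K`. -/
theorem rmsprop_second_moment_tracks_gradient
    (d : ℕ) (f : EuclideanSpace ℝ (Fin d) → ℝ)
    (hf : Differentiable ℝ f)
    (M L : ℝ)
    (hM : ∀ z, ‖gradient f z‖ ≤ M)
    (hL : ∀ z w, ‖gradient f z - gradient f w‖ ≤ L * ‖z - w‖)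
    (η α ε : ℝ) (hη : 0 < η) (hα : α ∈ Set.Ioo (0 : ℝ) 1) (hε : 0 < ε)
    (x₀ : EuclideanSpace ℝ (Fin d))
    (x v : ℕ → EuclideanSpace ℝ (Fin d))
    (hx0 : x 0 = x₀) (hv0 : v 0 = 0)
    (hv : ∀ k i, v (k + 1) i = α * v k i + (1 - α) * (gradient f (x k) i) ^ 2)
    (hx : ∀ k i,
      x (k + 1) i = x k i - η * gradient f (x k) i / (Real.sqrt (v (k + 1) i) + ε)) :
    ∀ K k : ℕ, 1 ≤ K → K ≤ k → ∀ j,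
      |v (k + 1) j - (gradient f (x k) j) ^ 2| ≤
        2 * η * M ^ 2 * L * K / ε + 2 * M ^ 2 * α ^ K := by
  obtain ⟨hα0, hα1⟩ := hα
  have hM0 : 0 ≤ M := le_trans (norm_nonneg _) (hM x₀)
  -- coordinate bound
  have hcoord : ∀ (u : EuclideanSpace ℝ (Fin d)) (j : Fin d), |u j| ≤ ‖u‖ := by
    intro u j
    rw [EuclideanSpace.norm_eq]
    have h1 : ‖u j‖ ^ 2 ≤ ∑ i, ‖u i‖ ^ 2 :=
      Finset.single_le_sum (f := fun i => ‖u i‖ ^ 2) (fun i _ => sq_nonneg _)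
        (Finset.mem_univ j)
    calc |u j| = Real.sqrt (‖u j‖ ^ 2) := by
          rw [Real.sqrt_sq (norm_nonneg _), Real.norm_eq_abs]
      _ ≤ Real.sqrt (∑ i, ‖u i‖ ^ 2) := Real.sqrt_le_sqrt h1
  have hg2 : ∀ t (j : Fin d), (gradient f (x t) j) ^ 2 ≤ M ^ 2 := by
    intro t j
    have h1 := hcoord (gradient f (x t)) j
    have h2 := hM (x t)
    nlinarith [abs_nonneg (gradient f (x t) j), sq_abs (gradient f (x t) j)]
  have hvb : ∀ t, ∀ j : Fin d, 0 ≤ v t j ∧ v t j ≤ M ^ 2 := by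
    intro t
    induction t with
    | zero =>
      intro j
      rw [hv0]
      constructor
      · simp
      · simp; positivity
    | succ t ih =>
      intro j
      rw [hv t j]
      constructor
      · nlinarith [(ih j).1, sq_nonneg (gradient f (x t) j)]
      · nlinarith [(ih j).2, hg2 t j]
  -- step-size bound
  have hstep : ∀ t, ‖x (t + 1) - x t‖ ≤ η * M / ε := by
    intro t
    have key : ∀ j : Fin d, ‖(x (t + 1) - x t) j‖ ≤ (η / ε) * |gradient f (x t) j| := by
      intro j
      have h1 : (x (t + 1) - x t) j
          = -(η * gradient f (x t) j / (Real.sqrt (v (t + 1) j) + ε)) := by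
        have := hx t j
        simp only [PiLp.sub_apply]
        rw [this]; ring
      have hden : ε ≤ Real.sqrt (v (t + 1) j) + ε :=
        le_add_of_nonneg_left (Real.sqrt_nonneg _)
      have hdenpos : 0 < Real.sqrt (v (t + 1) j) + ε := lt_of_lt_of_le hε hden
      rw [h1, norm_neg, Real.norm_eq_abs, abs_div, abs_mul, abs_of_pos hη,
        abs_of_pos hdenpos]
      calc η * |gradient f (x t) j| / (Real.sqrt (v (t + 1) j) + ε)
          ≤ η * |gradient f (x t) j| / ε := by gcongr
        _ = (η / ε) * |gradient f (x t) j| := by ring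
    have hsum : ∑ j, ‖(x (t + 1) - x t) j‖ ^ 2
        ≤ (η / ε) ^ 2 * ∑ j, ‖gradient f (x t) j‖ ^ 2 := by
      rw [Finset.mul_sum]
      apply Finset.sum_le_sum
      intro j _
      calc ‖(x (t + 1) - x t) j‖ ^ 2
          ≤ ((η / ε) * |gradient f (x t) j|) ^ 2 := by
            apply pow_le_pow_left₀ (norm_nonneg _) (key j)
        _ = (η / ε) ^ 2 * ‖gradient f (x t) j‖ ^ 2 := by
            rw [Real.norm_eq_abs]; ring
    calc ‖x (t + 1) - x t‖ = Real.sqrt (∑ j, ‖(x (t + 1) - x t) j‖ ^ 2) :=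
          EuclideanSpace.norm_eq _
      _ ≤ Real.sqrt ((η / ε) ^ 2 * ∑ j, ‖gradient f (x t) j‖ ^ 2) :=
          Real.sqrt_le_sqrt hsum
      _ = (η / ε) * Real.sqrt (∑ j, ‖gradient f (x t) j‖ ^ 2) := by
          rw [Real.sqrt_mul (sq_nonneg _), Real.sqrt_sq (by positivity)]
      _ = (η / ε) * ‖gradient f (x t)‖ := by rw [EuclideanSpace.norm_eq]
      _ ≤ (η / ε) * M :=
          mul_le_mul_of_nonneg_left (hM _) (by positivity)
      _ = η * M / ε := by ring
  intro K k hK1 hKk j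
  have hL0 : 0 ≤ L := by
    have h := hL 0 (EuclideanSpace.single j 1)
    have h2 : ‖(0 : EuclideanSpace ℝ (Fin d)) - EuclideanSpace.single j 1‖ = 1 := by
      rw [zero_sub, norm_neg, EuclideanSpace.norm_single, norm_one]
    rw [h2, mul_one] at h
    exact le_trans (norm_nonneg _) h
  set c : ℝ := 2 * η * M ^ 2 * L / ε with hc
  have hc0 : 0 ≤ c := by positivity
  -- per-step squared-gradient drift
  have hdiff : ∀ t, |(gradient f (x t) j) ^ 2 - (gradient f (x (t + 1)) j) ^ 2| ≤ c := by
    intro t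
    have hab : |gradient f (x t) j - gradient f (x (t + 1)) j|
        ≤ L * (η * M / ε) := by
      calc |gradient f (x t) j - gradient f (x (t + 1)) j|
          = |(gradient f (x t) - gradient f (x (t + 1))) j| := by
            simp only [PiLp.sub_apply]
        _ ≤ ‖gradient f (x t) - gradient f (x (t + 1))‖ := hcoord _ j
        _ ≤ L * ‖x t - x (t + 1)‖ := hL _ _
        _ = L * ‖x (t + 1) - x t‖ := by rw [norm_sub_rev]
        _ ≤ L * (η * M / ε) := by gcongr; exact hstep t
    have ha : |gradient f (x t) j| ≤ M := le_trans (hcoord _ j) (hM _)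
    have hb : |gradient f (x (t + 1)) j| ≤ M := le_trans (hcoord _ j) (hM _)
    have key : (gradient f (x t) j) ^ 2 - (gradient f (x (t + 1)) j) ^ 2
        = (gradient f (x t) j + gradient f (x (t + 1)) j)
          * (gradient f (x t) j - gradient f (x (t + 1)) j) := by ring
    rw [key, abs_mul]
    calc |gradient f (x t) j + gradient f (x (t + 1)) j|
          * |gradient f (x t) j - gradient f (x (t + 1)) j|
        ≤ (2 * M) * (L * (η * M / ε)) := by
          apply mul_le_mul _ hab (abs_nonneg _) (by positivity)
          calc |gradient f (x t) j + gradient f (x (t + 1)) j|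
              ≤ |gradient f (x t) j| + |gradient f (x (t + 1)) j| := abs_add_le _ _
            _ ≤ 2 * M := by linarith
      _ = c := by rw [hc]; ring
  -- main induction
  have hind : ∀ n t, |v (t + n + 1) j - (gradient f (x (t + n)) j) ^ 2|
      ≤ α ^ n * |v (t + 1) j - (gradient f (x t) j) ^ 2| + n * c := by
    intro n
    induction n with
    | zero => intro t; simp
    | succ n ih =>
      intro t
      have step : |v (t + n + 1 + 1) j - (gradient f (x (t + n + 1)) j) ^ 2|
          ≤ α * |v (t + n + 1) j - (gradient f (x (t + n)) j) ^ 2| + c := by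
        have h1 : v (t + n + 1 + 1) j - (gradient f (x (t + n + 1)) j) ^ 2
            = α * ((v (t + n + 1) j - (gradient f (x (t + n)) j) ^ 2)
              + ((gradient f (x (t + n)) j) ^ 2 - (gradient f (x (t + n + 1)) j) ^ 2)) := by
          rw [hv (t + n + 1) j]; ring
        rw [h1, abs_mul, abs_of_pos hα0]
        have h2 := abs_add_le (v (t + n + 1) j - (gradient f (x (t + n)) j) ^ 2)
          ((gradient f (x (t + n)) j) ^ 2 - (gradient f (x (t + n + 1)) j) ^ 2)
        have h3 := hdiff (t + n)
        nlinarith [abs_nonneg (v (t + n + 1) j - (gradient f (x (t + n)) j) ^ 2)]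
      have ihn := ih t
      have hanneg : (0:ℝ) ≤ α ^ n := by positivity
      have habs : (0:ℝ) ≤ |v (t + 1) j - (gradient f (x t) j) ^ 2| := abs_nonneg _
      have heq : t + (n + 1) = t + n + 1 := rfl
      rw [heq]
      push_cast
      have hmul := mul_le_mul_of_nonneg_left ihn hα0.le
      calc |v (t + n + 1 + 1) j - (gradient f (x (t + n + 1)) j) ^ 2|
          ≤ α * |v (t + n + 1) j - (gradient f (x (t + n)) j) ^ 2| + c := step
        _ ≤ α * (α ^ n * |v (t + 1) j - (gradient f (x t) j) ^ 2| + n * c) + c := by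
            linarith
        _ ≤ α ^ (n + 1) * |v (t + 1) j - (gradient f (x t) j) ^ 2| + (n + 1) * c := by
            have hnc : (0:ℝ) ≤ (n:ℝ) * c := by positivity
            have h5 : α * ((n:ℝ) * c) ≤ (n:ℝ) * c := mul_le_of_le_one_left hnc hα1.le
            have h6 : α * (α ^ n * |v (t + 1) j - (gradient f (x t) j) ^ 2| + (n:ℝ) * c) + c
                = α ^ (n + 1) * |v (t + 1) j - (gradient f (x t) j) ^ 2|
                  + (α * ((n:ℝ) * c) + c) := by ring
            linarith
  obtain ⟨t, rfl⟩ : ∃ t, k = t + K := ⟨k - K, (Nat.sub_add_cancel hKk).symm⟩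
  have hmain := hind K t
  have hDt : |v (t + 1) j - (gradient f (x t) j) ^ 2| ≤ M ^ 2 := by
    have h1 := (hvb (t + 1) j).1
    have h2 := (hvb (t + 1) j).2
    have h3 := hg2 t j
    have h4 := sq_nonneg (gradient f (x t) j)
    rw [abs_le]; constructor <;> linarith
  have hαK : (0:ℝ) ≤ α ^ K := by positivity
  have hαK1 : α ^ K ≤ 1 := pow_le_one₀ hα0.le hα1.le
  calc |v (t + K + 1) j - (gradient f (x (t + K)) j) ^ 2|
      ≤ α ^ K * |v (t + 1) j - (gradient f (x t) j) ^ 2| + K * c := hmain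
    _ ≤ α ^ K * M ^ 2 + K * c := by gcongr
    _ ≤ 2 * η * M ^ 2 * L * K / ε + 2 * M ^ 2 * α ^ K := by
        rw [hc]
        have hM2 : (0:ℝ) ≤ M ^ 2 := sq_nonneg M
        have hKc : (K:ℝ) * (2 * η * M ^ 2 * L / ε) = 2 * η * M ^ 2 * L * K / ε := by ring
        have hprod : (0:ℝ) ≤ M ^ 2 * α ^ K := mul_nonneg hM2 hαK
        linarith
end
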